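/- arXiv:2202.07514 — 6 statements merged into one kernel-verified Lean document; each statement's English description precedes it below -/
import Mathlib

section
/- For every integer n ≥ 3 and all sign assignments a₁,…,aₙ, b₁,…,bₙ ∈ {−1, 1}, one has C(n−1, 2) · Σ_{i=1}^{n} aᵢ · Π_{j≠i} bⱼ − Σ_{1 ≤ i < j < k ≤ n} aᵢ aⱼ a_k · Π_{m∉{i,j,k}} b_m ≤ 2 · C(n, 3). -/
/-!
Put `P = ∏ⱼ bⱼ` and `cᵢ = aᵢ bᵢ`. Since `bⱼ² = 1`, we have `∏_{j ≠ i} bⱼ = bᵢ P` and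
`∏_{m ∉ S} b_m = (∏_{m ∈ S} b_m) P`, so the expression is `P` times the same expression in the
signs `cᵢ` with all `b`'s equal to `1`. Each `i` lies in `C(n-1,2)` triples, so that expression is
`∑_{i<j<k} (cᵢ + cⱼ + c_k - cᵢ cⱼ c_k)`, and for signs every summand is `±2`.
-/

open Finset

namespace Finset

variable {α M : Type*} [DecidableEq α]

theorem sum_powersetCard_sum [AddCommMonoid M] (s : Finset α) (k : ℕ) (f : α → M) :
    ∑ t ∈ s.powersetCard (k + 1), ∑ i ∈ t, f i = (#s - 1).choose k • ∑ i ∈ s, f i := by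
  have hcount : ∀ i ∈ s, #((s.powersetCard (k + 1)).filter ({i} ⊆ ·)) = (#s - 1).choose k :=
    fun i hi => by
      simpa using card_filter_powersetCard_subset {i} s (k + 1) (singleton_subset_iff.2 hi)
        (by simp)
  calc ∑ t ∈ s.powersetCard (k + 1), ∑ i ∈ t, f i
      = ∑ i ∈ s, ∑ _t ∈ (s.powersetCard (k + 1)).filter ({i} ⊆ ·), f i :=
        sum_comm' fun t i => by
          simp only [mem_powersetCard, mem_filter, singleton_subset_iff]
          exact ⟨fun ⟨⟨hts, hk⟩, hi⟩ => ⟨⟨⟨hts, hk⟩, hi⟩, hts hi⟩,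
            fun ⟨⟨⟨hts, hk⟩, hi⟩, _⟩ => ⟨⟨hts, hk⟩, hi⟩⟩
    _ = (#s - 1).choose k • ∑ i ∈ s, f i := by
        rw [smul_sum]
        exact sum_congr rfl fun i hi => by rw [sum_const, hcount i hi]

variable [CommMonoid M] {b : α → M}

theorem prod_erase_eq_mul_prod (hb : ∀ i, b i * b i = 1) {s : Finset α} {i : α} (hi : i ∈ s) :
    ∏ j ∈ s.erase i, b j = b i * ∏ j ∈ s, b j := by
  rw [← mul_prod_erase s b hi, ← mul_assoc, hb, one_mul]

theorem prod_compl_eq_prod_mul_prod [Fintype α] (hb : ∀ i, b i * b i = 1) (s : Finset α) :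
    ∏ i ∈ sᶜ, b i = (∏ i ∈ s, b i) * ∏ i, b i := by
  rw [← prod_mul_prod_compl s b, ← mul_assoc, ← prod_mul_distrib, prod_congr rfl fun i _ => hb i,
    prod_const_one, one_mul]

end Finset

section Signs

variable {ι : Type*} [DecidableEq ι] {c : ι → ℝ}

theorem abs_sum_sub_prod_le_two (hc : ∀ i, c i = 1 ∨ c i = -1) {s : Finset ι} (hs : #s = 3) :
    |∑ i ∈ s, c i - ∏ i ∈ s, c i| ≤ 2 := by
  obtain ⟨i, j, k, hij, hik, hjk, rfl⟩ := card_eq_three.1 hs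
  rw [sum_insert (by simp [hij, hik]), sum_pair hjk, prod_insert (by simp [hij, hik]),
    prod_pair hjk]
  rcases hc i with h₁ | h₁ <;> rcases hc j with h₂ | h₂ <;> rcases hc k with h₃ | h₃ <;>
    norm_num [h₁, h₂, h₃]

theorem abs_choose_mul_sum_sub_sum_prod_le [Fintype ι] (hc : ∀ i, c i = 1 ∨ c i = -1) :
    |((Fintype.card ι - 1).choose 2 : ℝ) * ∑ i, c i - ∑ s ∈ powersetCard 3 univ, ∏ i ∈ s, c i|
      ≤ 2 * ((Fintype.card ι).choose 3 : ℝ) := by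
  rw [← nsmul_eq_mul, ← card_univ, ← sum_powersetCard_sum, ← sum_sub_distrib]
  calc |∑ s ∈ powersetCard 3 univ, (∑ i ∈ s, c i - ∏ i ∈ s, c i)|
      ≤ ∑ s ∈ powersetCard 3 univ, |∑ i ∈ s, c i - ∏ i ∈ s, c i| := abs_sum_le_sum_abs _ _
    _ ≤ ∑ _s ∈ powersetCard 3 (univ : Finset ι), (2 : ℝ) :=
        sum_le_sum fun s hs => abs_sum_sub_prod_le_two hc (mem_powersetCard.1 hs).2
    _ = 2 * ((Fintype.card ι).choose 3 : ℝ) := by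
        rw [sum_const, card_powersetCard, card_univ, nsmul_eq_mul, mul_comm]

end Signs

theorem stmt0_general (n : ℕ) (a b : Fin n → ℝ)
    (ha : ∀ i, a i = 1 ∨ a i = -1) (hb : ∀ i, b i = 1 ∨ b i = -1) :
    ((n - 1).choose 2 : ℝ) * ∑ i, a i * ∏ j ∈ Finset.univ.erase i, b j
      - ∑ S ∈ Finset.powersetCard 3 (Finset.univ : Finset (Fin n)),
          (∏ i ∈ S, a i) * ∏ m ∈ Sᶜ, b m
      ≤ 2 * (n.choose 3 : ℝ) := by
  have hb_sq : ∀ i, b i * b i = 1 := fun i => by rcases hb i with h | h <;> norm_num [h]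
  have hab : ∀ i, a i * b i = 1 ∨ a i * b i = -1 := fun i => by
    rcases ha i with h | h <;> rcases hb i with h' | h' <;> norm_num [h, h']
  have hP : |∏ i, b i| = 1 := by
    rw [abs_prod]
    exact prod_eq_one fun i _ => by rcases hb i with h | h <;> norm_num [h]
  have hsingle : ∑ i, a i * ∏ j ∈ univ.erase i, b j = (∏ i, b i) * ∑ i, a i * b i := by
    rw [mul_sum]
    exact sum_congr rfl fun i _ => by rw [prod_erase_eq_mul_prod hb_sq (mem_univ i)]; ring
  have htriple : ∑ S ∈ powersetCard 3 univ, (∏ i ∈ S, a i) * ∏ m ∈ Sᶜ, b m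
      = (∏ i, b i) * ∑ S ∈ powersetCard 3 univ, ∏ i ∈ S, a i * b i := by
    rw [mul_sum]
    exact sum_congr rfl fun S _ => by
      rw [prod_compl_eq_prod_mul_prod hb_sq, prod_mul_distrib]; ring
  have hbound := abs_choose_mul_sum_sub_sum_prod_le hab
  rw [Fintype.card_fin] at hbound
  rw [hsingle, htriple, ← mul_assoc, mul_comm _ (∏ i, b i), mul_assoc, ← mul_sub]
  exact (le_abs_self _).trans (by rwa [abs_mul, hP, one_mul])

/-- classical (noncontextual) bound of the scalable
noncontextuality expression `Iₙ`.  For every `n ≥ 3` and all sign assignments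
`aᵢ, bⱼ ∈ {−1, 1}`,
`C(n−1,2) · Σᵢ aᵢ Π_{j≠i} bⱼ − Σ_{i<j<k} aᵢaⱼa_k Π_{m∉{i,j,k}} b_m ≤ 2·C(n,3)`.
The sum over triples `1 ≤ i < j < k ≤ n` is expressed as a sum over the
three-element subsets `S` of `{1,…,n}`. -/
theorem stmt0 (n : ℕ) (hn : 3 ≤ n) (a b : Fin n → ℝ)
    (ha : ∀ i, a i = 1 ∨ a i = -1) (hb : ∀ i, b i = 1 ∨ b i = -1) :
    ((n - 1).choose 2 : ℝ) * ∑ i, a i * ∏ j ∈ Finset.univ.erase i, b j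
      - ∑ S ∈ Finset.powersetCard 3 (Finset.univ : Finset (Fin n)),
          (∏ i ∈ S, a i) * ∏ m ∈ Sᶜ, b m
      ≤ 2 * (n.choose 3 : ℝ) :=
  stmt0_general n a b ha hb
end

section
/- Fix an integer n ≥ 3. On (ℂ²)^{⊗n} set Aᵢ = Xᵢ and Bᵢ = Zᵢ for i = 1,…,n, and let ψ be a unit vector satisfying the stabilizer equations Gᵢ ψ = ψ for all i, where Gᵢ = Xᵢ · Π_{j≠i} Zⱼ. Then for every i, ⟨ψ, Aᵢ (Π_{j≠i} Bⱼ) ψ⟩ = 1, and for every triple 1 ≤ i < j < k ≤ n, ⟨ψ, Aᵢ Aⱼ A_k (Π_{m∉{i,j,k}} B_m) ψ⟩ = −1; consequently the expression Iₙ = C(n−1,2) · Σᵢ ⟨ψ, Aᵢ (Π_{j≠i} Bⱼ) ψ⟩ − Σ_{i<j<k} ⟨ψ, Aᵢ Aⱼ A_k (Π_{m∉{i,j,k}} B_m) ψ⟩ attains the value n·C(n−1,2) + C(n,3), the maximal quantum (algebraic) value of Iₙ. -/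
open Matrix

/-- The Pauli matrix `X = !![0, 1; 1, 0]`. -/
noncomputable def PauliX : Matrix (Fin 2) (Fin 2) ℂ := !![0, 1; 1, 0]

/-- The Pauli matrix `Z = !![1, 0; 0, -1]`. -/
noncomputable def PauliZ : Matrix (Fin 2) (Fin 2) ℂ := !![1, 0; 0, -1]

/-- The operator on `(ℂ²)^{⊗n}` (with `(ℂ²)^{⊗n}` realised as matrices indexed by
`Fin n → Fin 2`) acting as the one-qubit matrix `M` on the `i`-th tensor factor and
as the identity on all other factors. -/
noncomputable def tensorFactor (n : ℕ) (M : Matrix (Fin 2) (Fin 2) ℂ) (i : Fin n) :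
    Matrix (Fin n → Fin 2) (Fin n → Fin 2) ℂ :=
  Matrix.of fun f g =>
    M (f i) (g i) * ∏ j ∈ Finset.univ.erase i, (if f j = g j then (1 : ℂ) else 0)

/-- `Xᵢ`: the Pauli `X` acting on the `i`-th qubit. -/
noncomputable def Xop (n : ℕ) (i : Fin n) : Matrix (Fin n → Fin 2) (Fin n → Fin 2) ℂ :=
  tensorFactor n PauliX i

/-- `Zᵢ`: the Pauli `Z` acting on the `i`-th qubit. -/
noncomputable def Zop (n : ℕ) (i : Fin n) : Matrix (Fin n → Fin 2) (Fin n → Fin 2) ℂ :=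
  tensorFactor n PauliZ i

/-- The (matrix) product `Π_{i ∈ S} F i`, multiplied in increasing order of the
index; all products appearing below are over pairwise commuting matrices, so the
order of the factors is irrelevant. -/
noncomputable def matProd {n : ℕ} (F : Fin n → Matrix (Fin n → Fin 2) (Fin n → Fin 2) ℂ)
    (S : Finset (Fin n)) : Matrix (Fin n → Fin 2) (Fin n → Fin 2) ℂ :=
  ((S.sort (· ≤ ·)).map F).prod

/-- The stabilizing operator `Gᵢ = Xᵢ · Π_{j ≠ i} Zⱼ` of the `n`-qubit complete-graph
state. -/
noncomputable def Gop (n : ℕ) (i : Fin n) : Matrix (Fin n → Fin 2) (Fin n → Fin 2) ℂ :=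
  Xop n i * matProd (Zop n) (Finset.univ.erase i)

/-!
In the computational basis `Xᵢ` flips bit `i` and `Zᵢ` multiplies by the sign `zᵢ = ±1` of
bit `i`, so `Gᵢ ψ = ψ` says `ψ(f with bit i flipped) = T(f) · zᵢ(f) · ψ(f)`, where `T` is the
product of all the signs. Flipping the bits of a set `S` one after another, each new flip picks
up the sign `(-1)^(number of bits already flipped)`, whence
`ψ(flip_S f) = (-1)^C(|S|,2) · T^|S| · (∏_{s ∈ S} z_s) · ψ(f)`. For `|S|` odd the string of
`Z`'s on `Sᶜ` cancels the remaining signs, so `X_S Z_{Sᶜ} ψ = (-1)^C(|S|,2) ψ`; for `|S| = 3`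
this is `-ψ`.
-/

open Finset

def zSign (a : Fin 2) : ℂ := if a = 0 then 1 else -1

lemma zSign_add_one (a : Fin 2) : zSign (a + 1) = -zSign a := by
  fin_cases a <;> simp [zSign]

lemma zSign_mul_self (a : Fin 2) : zSign a * zSign a = 1 := by
  fin_cases a <;> simp [zSign]

lemma pauliX_apply (a b : Fin 2) : PauliX a b = if b = a + 1 then 1 else 0 := by
  fin_cases a <;> fin_cases b <;> simp [PauliX]

lemma pauliZ_eq_diagonal : PauliZ = diagonal zSign := by
  ext a b; fin_cases a <;> fin_cases b <;> simp [PauliZ, zSign]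

lemma tensorFactor_mulVec_apply {n : ℕ} (M : Matrix (Fin 2) (Fin 2) ℂ) (i : Fin n)
    (ψ : (Fin n → Fin 2) → ℂ) (f : Fin n → Fin 2) :
    (tensorFactor n M i *ᵥ ψ) f = ∑ b, M (f i) b * ψ (Function.update f i b) := by
  set F : (Fin n → Fin 2) → ℂ := fun g =>
    M (f i) (g i) * (if ∀ j ∈ univ.erase i, f j = g j then 1 else 0) * ψ g
  have hF : ∀ g ∉ univ.image (Function.update f i), F g = 0 := fun g hg => by
    refine mul_eq_zero_of_left (mul_eq_zero_of_right _ (if_neg fun hfg => hg ?_)) _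
    refine mem_image.mpr ⟨g i, mem_univ _, funext fun j => ?_⟩
    by_cases hj : j = i
    · subst hj; simp
    · simp [Function.update_of_ne hj, hfg j (mem_erase.mpr ⟨hj, mem_univ _⟩)]
  calc (tensorFactor n M i *ᵥ ψ) f = ∑ g, F g := by
        simp only [F, tensorFactor, mulVec, dotProduct, of_apply, prod_boole]; congr!
    _ = ∑ g ∈ univ.image (Function.update f i), F g :=
        (sum_subset (subset_univ _) fun g _ hg => hF g hg).symm
    _ = ∑ b, F (Function.update f i b) :=
        sum_image fun b _ c _ h => Function.update_injective f i h
    _ = _ := sum_congr rfl fun b _ => by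
        simp +contextual [F]

lemma Xop_mulVec_apply {n : ℕ} (i : Fin n) (ψ : (Fin n → Fin 2) → ℂ) (f : Fin n → Fin 2) :
    (Xop n i *ᵥ ψ) f = ψ (Function.update f i (f i + 1)) := by
  simp [Xop, tensorFactor_mulVec_apply, pauliX_apply]

lemma Zop_mulVec_apply {n : ℕ} (i : Fin n) (ψ : (Fin n → Fin 2) → ℂ) (f : Fin n → Fin 2) :
    (Zop n i *ᵥ ψ) f = zSign (f i) * ψ f := by
  simp [Zop, tensorFactor_mulVec_apply, pauliZ_eq_diagonal, diagonal_apply]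

def flipOn {n : ℕ} (S : Finset (Fin n)) (f : Fin n → Fin 2) : Fin n → Fin 2 :=
  fun m => if m ∈ S then f m + 1 else f m

lemma flipOn_empty {n : ℕ} (f : Fin n → Fin 2) : flipOn ∅ f = f := rfl

lemma flipOn_insert {n : ℕ} {S : Finset (Fin n)} {s : Fin n} (hs : s ∉ S) (f : Fin n → Fin 2) :
    flipOn (insert s S) f = Function.update (flipOn S f) s (flipOn S f s + 1) := by
  funext m
  by_cases hm : m = s
  · subst hm; simp [flipOn, hs]
  · simp [flipOn, hm]

lemma prod_zSign_flipOn {n : ℕ} (S : Finset (Fin n)) (f : Fin n → Fin 2) :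
    ∏ a, zSign (flipOn S f a) = (-1) ^ #S * ∏ a, zSign (f a) := by
  have h : ∀ a, zSign (flipOn S f a) = (if a ∈ S then -1 else 1) * zSign (f a) := fun a => by
    by_cases ha : a ∈ S <;> simp [flipOn, ha, zSign_add_one]
  simp only [h, prod_mul_distrib, Fintype.prod_ite_mem, prod_const]

lemma list_prod_map_Xop_mulVec_apply {n : ℕ} (l : List (Fin n)) (hl : l.Nodup)
    (ψ : (Fin n → Fin 2) → ℂ) (f : Fin n → Fin 2) :
    ((l.map (Xop n)).prod *ᵥ ψ) f = ψ (flipOn l.toFinset f) := by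
  induction l generalizing f with
  | nil => simp [flipOn_empty]
  | cons a l ih =>
    obtain ⟨ha, hl⟩ := List.nodup_cons.mp hl
    rw [List.map_cons, List.prod_cons, ← mulVec_mulVec, Xop_mulVec_apply, ih hl,
      List.toFinset_cons, flipOn_insert (by simpa using ha)]
    congr 1
    funext m
    by_cases hm : m = a
    · subst hm; simp [flipOn, ha]
    · simp [flipOn, hm]

lemma list_prod_map_Zop_mulVec_apply {n : ℕ} (l : List (Fin n))
    (ψ : (Fin n → Fin 2) → ℂ) (f : Fin n → Fin 2) :
    ((l.map (Zop n)).prod *ᵥ ψ) f = (l.map fun a => zSign (f a)).prod * ψ f := by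
  induction l with
  | nil => simp
  | cons a l ih =>
    rw [List.map_cons, List.prod_cons, ← mulVec_mulVec, Zop_mulVec_apply, ih,
      List.map_cons, List.prod_cons, mul_assoc]

lemma matProd_Xop_mulVec_apply {n : ℕ} (S : Finset (Fin n)) (ψ : (Fin n → Fin 2) → ℂ)
    (f : Fin n → Fin 2) : (matProd (Xop n) S *ᵥ ψ) f = ψ (flipOn S f) := by
  rw [matProd, list_prod_map_Xop_mulVec_apply _ (sort_nodup S _), sort_toFinset]

lemma matProd_Zop_mulVec_apply {n : ℕ} (S : Finset (Fin n)) (ψ : (Fin n → Fin 2) → ℂ)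
    (f : Fin n → Fin 2) : (matProd (Zop n) S *ᵥ ψ) f = (∏ a ∈ S, zSign (f a)) * ψ f := by
  rw [matProd, list_prod_map_Zop_mulVec_apply,
    ← List.prod_toFinset _ (sort_nodup S _), sort_toFinset]

lemma prod_zSign_mul_self {n : ℕ} (S : Finset (Fin n)) (f : Fin n → Fin 2) :
    (∏ a ∈ S, zSign (f a)) * ∏ a ∈ S, zSign (f a) = 1 := by
  rw [← prod_mul_distrib]
  exact prod_eq_one fun a _ => zSign_mul_self (f a)

lemma prod_erase_zSign {n : ℕ} (i : Fin n) (f : Fin n → Fin 2) :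
    ∏ a ∈ univ.erase i, zSign (f a) = (∏ a, zSign (f a)) * zSign (f i) := by
  rw [← mul_prod_erase univ _ (mem_univ i)]
  linear_combination (∏ a ∈ univ.erase i, zSign (f a)) * (zSign_mul_self (f i)).symm

lemma apply_update_of_Gop_mulVec {n : ℕ} {i : Fin n} {ψ : (Fin n → Fin 2) → ℂ}
    (h : Gop n i *ᵥ ψ = ψ) (f : Fin n → Fin 2) :
    ψ (Function.update f i (f i + 1)) = (∏ a, zSign (f a)) * zSign (f i) * ψ f := by
  have hf := congrFun h f
  rw [Gop, ← mulVec_mulVec, Xop_mulVec_apply, matProd_Zop_mulVec_apply,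
    prod_congr rfl fun a ha => by rw [Function.update_of_ne (ne_of_mem_erase ha)]] at hf
  rw [← prod_erase_zSign, ← hf, ← mul_assoc, prod_zSign_mul_self, one_mul]

lemma apply_flipOn_of_Gop_mulVec {n : ℕ} {ψ : (Fin n → Fin 2) → ℂ} (S : Finset (Fin n))
    (hstab : ∀ s ∈ S, Gop n s *ᵥ ψ = ψ) (f : Fin n → Fin 2) :
    ψ (flipOn S f) = (-1) ^ (#S).choose 2 * (∏ a, zSign (f a)) ^ #S *
      (∏ s ∈ S, zSign (f s)) * ψ f := by
  induction S using Finset.induction_on with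
  | empty => simp [flipOn_empty]
  | insert s S hs ih =>
    have hfs : flipOn S f s = f s := by simp [flipOn, hs]
    rw [flipOn_insert hs, apply_update_of_Gop_mulVec (hstab s (mem_insert_self s S)),
      prod_zSign_flipOn, hfs, ih fun t ht => hstab t (mem_insert_of_mem ht),
      card_insert_of_notMem hs, prod_insert hs, Nat.choose_succ_succ, Nat.choose_one_right]
    ring

theorem matProd_Xop_mul_matProd_Zop_compl_mulVec {n : ℕ} {ψ : (Fin n → Fin 2) → ℂ}
    {S : Finset (Fin n)} (hS : Odd #S) (hstab : ∀ s ∈ S, Gop n s *ᵥ ψ = ψ) :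
    (matProd (Xop n) S * matProd (Zop n) Sᶜ) *ᵥ ψ = (-1 : ℂ) ^ (#S).choose 2 • ψ := by
  funext f
  have hcompl : ∏ a ∈ Sᶜ, zSign (flipOn S f a) = ∏ a ∈ Sᶜ, zSign (f a) :=
    prod_congr rfl fun a ha => by simp [flipOn, mem_compl.mp ha]
  obtain ⟨k, hk⟩ := hS
  rw [← mulVec_mulVec, matProd_Xop_mulVec_apply, matProd_Zop_mulVec_apply, hcompl,
    apply_flipOn_of_Gop_mulVec S hstab, ← prod_compl_mul_prod S, hk]
  set P := ∏ a ∈ Sᶜ, zSign (f a)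
  set Q := ∏ a ∈ S, zSign (f a)
  have hPQ : (P * Q) ^ (2 * k + 1) * (P * Q) = 1 := by
    rw [← pow_succ, show 2 * k + 1 + 1 = 2 * (k + 1) by ring, pow_mul, mul_pow, sq, sq,
      prod_zSign_mul_self, prod_zSign_mul_self, one_mul, one_pow]
  simp only [Pi.smul_apply, smul_eq_mul]
  linear_combination (-1) ^ (2 * k + 1).choose 2 * ψ f * hPQ

theorem stmt1_general (n : ℕ) (ψ : (Fin n → Fin 2) → ℂ)
    (hunit : star ψ ⬝ᵥ ψ = 1)
    (hstab : ∀ i : Fin n, (Gop n i).mulVec ψ = ψ) :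
    (∀ i : Fin n,
      star ψ ⬝ᵥ ((Xop n i * matProd (Zop n) (Finset.univ.erase i)).mulVec ψ) = 1) ∧
    (∀ S : Finset (Fin n), S.card = 3 →
      star ψ ⬝ᵥ ((matProd (Xop n) S * matProd (Zop n) Sᶜ).mulVec ψ) = -1) ∧
    ((n - 1).choose 2 : ℂ) *
        (∑ i : Fin n,
          star ψ ⬝ᵥ ((Xop n i * matProd (Zop n) (Finset.univ.erase i)).mulVec ψ))
      - ∑ S ∈ Finset.powersetCard 3 (Finset.univ : Finset (Fin n)),
          star ψ ⬝ᵥ ((matProd (Xop n) S * matProd (Zop n) Sᶜ).mulVec ψ)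
      = (n : ℂ) * ((n - 1).choose 2 : ℂ) + (n.choose 3 : ℂ) := by
  have h1 (i : Fin n) :
      star ψ ⬝ᵥ ((Xop n i * matProd (Zop n) (univ.erase i)) *ᵥ ψ) = 1 := by
    rw [← Gop, hstab i, hunit]
  have h3 (S : Finset (Fin n)) (hS : #S = 3) :
      star ψ ⬝ᵥ ((matProd (Xop n) S * matProd (Zop n) Sᶜ) *ᵥ ψ) = -1 := by
    rw [matProd_Xop_mul_matProd_Zop_compl_mulVec (by rw [hS]; decide) fun s _ => hstab s,
      dotProduct_smul, hunit, hS]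
    norm_num
  refine ⟨h1, h3, ?_⟩
  rw [sum_congr rfl fun i _ => h1 i,
    sum_congr rfl fun S hS => h3 S (mem_powersetCard_univ.mp hS)]
  simp only [sum_const, card_univ, Fintype.card_fin, card_powersetCard, nsmul_eq_mul]
  ring

/-- with `Aᵢ = Xᵢ`, `Bᵢ = Zᵢ` and `ψ` a unit vector in `(ℂ²)^{⊗n}`
satisfying the stabilizer equations `Gᵢ ψ = ψ`, every correlator
`⟨ψ, Aᵢ (Π_{j≠i} Bⱼ) ψ⟩` equals `1`, every correlator
`⟨ψ, Aᵢ Aⱼ A_k (Π_{m∉{i,j,k}} B_m) ψ⟩` (for `i < j < k`, i.e. for a three-element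
subset `S = {i,j,k}`) equals `−1`, and hence the expression `Iₙ` attains its maximal
quantum (algebraic) value `n·C(n−1,2) + C(n,3)`. -/
theorem stmt1 (n : ℕ) (hn : 3 ≤ n) (ψ : (Fin n → Fin 2) → ℂ)
    (hunit : star ψ ⬝ᵥ ψ = 1)
    (hstab : ∀ i : Fin n, (Gop n i).mulVec ψ = ψ) :
    (∀ i : Fin n,
      star ψ ⬝ᵥ ((Xop n i * matProd (Zop n) (Finset.univ.erase i)).mulVec ψ) = 1) ∧
    (∀ S : Finset (Fin n), S.card = 3 →
      star ψ ⬝ᵥ ((matProd (Xop n) S * matProd (Zop n) Sᶜ).mulVec ψ) = -1) ∧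
    ((n - 1).choose 2 : ℂ) *
        (∑ i : Fin n,
          star ψ ⬝ᵥ ((Xop n i * matProd (Zop n) (Finset.univ.erase i)).mulVec ψ))
      - ∑ S ∈ Finset.powersetCard 3 (Finset.univ : Finset (Fin n)),
          star ψ ⬝ᵥ ((matProd (Xop n) S * matProd (Zop n) Sᶜ).mulVec ψ)
      = (n : ℂ) * ((n - 1).choose 2 : ℂ) + (n.choose 3 : ℂ) :=
  stmt1_general n ψ hunit hstab
end

section
/- Under these hypotheses, A₁B₁ψ = A₂B₂ψ = A₃B₃ψ and AᵢBᵢψ = −BᵢAᵢψ for every i ∈ {1,2,3}; in particular (AᵢBᵢ + BᵢAᵢ)ψ = 0 for every i ∈ {1,2,3}. -/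
/-!
Write `Pᵢ = AᵢBᵢ`. Operators with different indices commute, so products of the relations can be
regrouped index by index: applying `P₂` to `A₁B₂B₃ψ = ψ` gives `A₁A₂B₃ψ`, which is `P₁ψ` by
`B₁A₂B₃ψ = ψ`; thus `P₁ψ = P₂ψ = P₃ψ`. Likewise `A₁A₂A₃ · A₁B₂B₃ = P₂P₃` turns `A₁A₂A₃ψ = −ψ`
into `P₂P₃ψ = −ψ`, hence `Pᵢ²ψ = −ψ` for every `i`; as `BᵢAᵢ = Pᵢ⁻¹`, this is `Pᵢψ = −BᵢAᵢψ`.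
-/

section MulAction

variable {R M : Type*} [Monoid R] [MulAction R M]

theorem mul_smul_eq_mul_smul_of_mul_mul_smul_eq_self {a₀ b₀ a₁ b₁ c : R} {ψ : M}
    (hb₀ : b₀ * b₀ = 1) (hb₁ : b₁ * b₁ = 1) (ha₀a₁ : Commute a₀ a₁) (ha₀b₁ : Commute a₀ b₁)
    (h₀ : (a₀ * b₁ * c) • ψ = ψ) (h₁ : (b₀ * a₁ * c) • ψ = ψ) :
    (a₀ * b₀) • ψ = (a₁ * b₁) • ψ := by
  have key : a₁ * b₁ * (a₀ * b₁ * c) = a₀ * b₀ * (b₀ * a₁ * c) := by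
    calc a₁ * b₁ * (a₀ * b₁ * c) = a₀ * a₁ * (b₁ * b₁) * c := by
          simp only [← mul_assoc, ha₀b₁.symm.right_comm a₁, ha₀a₁.eq]
      _ = a₀ * b₀ * (b₀ * a₁ * c) := by
          simp only [hb₁, mul_one, ← mul_assoc, mul_assoc a₀ b₀ b₀, hb₀]
  calc (a₀ * b₀) • ψ = (a₀ * b₀ * (b₀ * a₁ * c)) • ψ := by rw [mul_smul (a₀ * b₀), h₁]
    _ = (a₁ * b₁) • ψ := by rw [← key, mul_smul (a₁ * b₁), h₀]

theorem mul_self_smul_eq_of_commute_of_smul_eq {p q : R} {ψ : M} (hpq : Commute p q)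
    (h : p • ψ = q • ψ) : (p * p) • ψ = (q * q) • ψ := by
  rw [mul_smul, h, ← mul_smul, hpq.eq, mul_smul, h, ← mul_smul]

end MulAction

section DistribMulAction

variable {R M : Type*} [Monoid R] [AddGroup M] [DistribMulAction R M]

theorem mul_mul_smul_eq_neg_of_smul_eq {a₀ a₁ a₂ b₁ b₂ : R} {ψ : M} (ha₀ : a₀ * a₀ = 1)
    (ha₀a₁ : Commute a₀ a₁) (ha₀a₂ : Commute a₀ a₂) (ha₂b₁ : Commute a₂ b₁)
    (hA : (a₀ * a₁ * a₂) • ψ = -ψ) (hB : (a₀ * b₁ * b₂) • ψ = ψ) :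
    (a₁ * b₁ * (a₂ * b₂)) • ψ = -ψ := by
  have key : a₀ * a₁ * a₂ * (a₀ * b₁ * b₂) = a₁ * b₁ * (a₂ * b₂) := by
    calc a₀ * a₁ * a₂ * (a₀ * b₁ * b₂) = a₀ * a₀ * (a₁ * a₂ * (b₁ * b₂)) := by
          simp only [mul_assoc, (ha₀a₁.mul_right ha₀a₂).symm.left_comm]
      _ = a₁ * b₁ * (a₂ * b₂) := by
          simp only [ha₀, one_mul, mul_assoc, ha₂b₁.left_comm]
  rw [← key, mul_smul, hB, hA]

theorem mul_smul_eq_neg_mul_smul_of_mul_self_smul_eq_neg {a b : R} {ψ : M} (ha : a * a = 1)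
    (hb : b * b = 1) (h : (a * b * (a * b)) • ψ = -ψ) : (a * b) • ψ = -((b * a) • ψ) := by
  have hinv : b * a * (a * b) = 1 := by rw [mul_assoc, ← mul_assoc a, ha, one_mul, hb]
  rw [← smul_neg, ← h, ← mul_smul, ← mul_assoc, hinv, one_mul]

theorem mul_smul_eq_and_anticommute_of_maximal_violation {A B : Fin 3 → R} {ψ : M}
    (hA : ∀ i, A i * A i = 1) (hB : ∀ i, B i * B i = 1)
    (cAA : ∀ i j, i ≠ j → Commute (A i) (A j)) (cAB : ∀ i j, i ≠ j → Commute (A i) (B j))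
    (cBB : ∀ i j, i ≠ j → Commute (B i) (B j))
    (h1 : (A 0 * B 1 * B 2) • ψ = ψ) (h2 : (B 0 * A 1 * B 2) • ψ = ψ)
    (h3 : (B 0 * B 1 * A 2) • ψ = ψ) (h4 : (A 0 * A 1 * A 2) • ψ = -ψ) :
    ((A 0 * B 0) • ψ = (A 1 * B 1) • ψ ∧ (A 1 * B 1) • ψ = (A 2 * B 2) • ψ) ∧
      ∀ i, (A i * B i) • ψ = -((B i * A i) • ψ) := by
  have cP i j (h : i ≠ j) : Commute (A i * B i) (A j * B j) :=
    ((cAA i j h).mul_right (cAB i j h)).mul_left ((cAB j i h.symm).symm.mul_right (cBB i j h))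
  have e01 : (A 0 * B 0) • ψ = (A 1 * B 1) • ψ :=
    mul_smul_eq_mul_smul_of_mul_mul_smul_eq_self (hB 0) (hB 1) (cAA 0 1 (by decide))
      (cAB 0 1 (by decide)) h1 h2
  have e02 : (A 0 * B 0) • ψ = (A 2 * B 2) • ψ := by
    refine mul_smul_eq_mul_smul_of_mul_mul_smul_eq_self (c := B 1) (hB 0) (hB 2)
      (cAA 0 2 (by decide)) (cAB 0 2 (by decide)) ?_ ?_
    · rwa [mul_assoc, ← (cBB 1 2 (by decide)).eq, ← mul_assoc]
    · rwa [mul_assoc, (cAB 2 1 (by decide)).eq, ← mul_assoc]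
  have n12 : (A 1 * B 1 * (A 2 * B 2)) • ψ = -ψ :=
    mul_mul_smul_eq_neg_of_smul_eq (hA 0) (cAA 0 1 (by decide)) (cAA 0 2 (by decide))
      (cAB 2 1 (by decide)) h4 h1
  have sq1 : (A 1 * B 1 * (A 1 * B 1)) • ψ = -ψ := by rwa [mul_smul, ← e01, e02, ← mul_smul]
  have sq : ∀ i, (A i * B i * (A i * B i)) • ψ = -ψ := by
    intro i
    fin_cases i
    · rw [← sq1]; exact mul_self_smul_eq_of_commute_of_smul_eq (cP 0 1 (by decide)) e01
    · exact sq1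
    · rw [← sq1]
      exact mul_self_smul_eq_of_commute_of_smul_eq (cP 2 1 (by decide)) (e02.symm.trans e01)
  exact ⟨⟨e01, e01.symm.trans e02⟩,
    fun i => mul_smul_eq_neg_mul_smul_of_mul_self_smul_eq_neg (hA i) (hB i) (sq i)⟩

end DistribMulAction

theorem stmt2_general {H : Type*} [NormedAddCommGroup H] [InnerProductSpace ℂ H]
    (A B : Fin 3 → H →L[ℂ] H)
    (hAinv : ∀ i (x : H), A i (A i x) = x)
    (hBinv : ∀ i (x : H), B i (B i x) = x)
    (hAA : ∀ i j, i ≠ j → ∀ x : H, A i (A j x) = A j (A i x))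
    (hAB : ∀ i j, i ≠ j → ∀ x : H, A i (B j x) = B j (A i x))
    (hBB : ∀ i j, i ≠ j → ∀ x : H, B i (B j x) = B j (B i x))
    (ψ : H)
    (h1 : A 0 (B 1 (B 2 ψ)) = ψ)
    (h2 : B 0 (A 1 (B 2 ψ)) = ψ)
    (h3 : B 0 (B 1 (A 2 ψ)) = ψ)
    (h4 : A 0 (A 1 (A 2 ψ)) = -ψ) :
    (A 0 (B 0 ψ) = A 1 (B 1 ψ) ∧ A 1 (B 1 ψ) = A 2 (B 2 ψ)) ∧
    (∀ i, A i (B i ψ) = -(B i (A i ψ))) ∧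
    (∀ i, A i (B i ψ) + B i (A i ψ) = 0) := by
  obtain ⟨heq, anti⟩ := mul_smul_eq_and_anticommute_of_maximal_violation (A := A) (B := B) (ψ := ψ)
    (fun i => ContinuousLinearMap.ext (hAinv i)) (fun i => ContinuousLinearMap.ext (hBinv i))
    (fun i j h => ContinuousLinearMap.ext (hAA i j h))
    (fun i j h => ContinuousLinearMap.ext (hAB i j h))
    (fun i j h => ContinuousLinearMap.ext (hBB i j h)) h1 h2 h3 h4
  exact ⟨heq, anti, fun i => eq_neg_iff_add_eq_zero.mp (anti i)⟩

/-- in a complex Hilbert space `H`, let `ψ` be a unit vector and let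
`A₁,A₂,A₃,B₁,B₂,B₃` be observables (self-adjoint involutive continuous linear
operators) satisfying the compatibility relations (`AᵢAⱼ = AⱼAᵢ`, `AᵢBⱼ = BⱼAᵢ`,
`BᵢBⱼ = BⱼBᵢ` for `i ≠ j`) and the maximal-violation relations of `I₃`
(`A₁B₂B₃ψ = ψ`, `B₁A₂B₃ψ = ψ`, `B₁B₂A₃ψ = ψ`, `A₁A₂A₃ψ = −ψ`).  Then
`A₁B₁ψ = A₂B₂ψ = A₃B₃ψ`, `AᵢBᵢψ = −BᵢAᵢψ` for every `i`, and in particular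
`(AᵢBᵢ + BᵢAᵢ)ψ = 0` for every `i`. -/
theorem stmt2 {H : Type*} [NormedAddCommGroup H] [InnerProductSpace ℂ H]
    (A B : Fin 3 → H →L[ℂ] H)
    (hAsa : ∀ i (x y : H), (inner ℂ (A i x) y : ℂ) = inner ℂ x (A i y))
    (hBsa : ∀ i (x y : H), (inner ℂ (B i x) y : ℂ) = inner ℂ x (B i y))
    (hAinv : ∀ i (x : H), A i (A i x) = x)
    (hBinv : ∀ i (x : H), B i (B i x) = x)
    (hAA : ∀ i j, i ≠ j → ∀ x : H, A i (A j x) = A j (A i x))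
    (hAB : ∀ i j, i ≠ j → ∀ x : H, A i (B j x) = B j (A i x))
    (hBB : ∀ i j, i ≠ j → ∀ x : H, B i (B j x) = B j (B i x))
    (ψ : H) (hψ : ‖ψ‖ = 1)
    (h1 : A 0 (B 1 (B 2 ψ)) = ψ)
    (h2 : B 0 (A 1 (B 2 ψ)) = ψ)
    (h3 : B 0 (B 1 (A 2 ψ)) = ψ)
    (h4 : A 0 (A 1 (A 2 ψ)) = -ψ) :
    (A 0 (B 0 ψ) = A 1 (B 1 ψ) ∧ A 1 (B 1 ψ) = A 2 (B 2 ψ)) ∧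
    (∀ i, A i (B i ψ) = -(B i (A i ψ))) ∧
    (∀ i, A i (B i ψ) + B i (A i ψ) = 0) :=
  stmt2_general A B hAinv hBinv hAA hAB hBB ψ h1 h2 h3 h4
end

section
/- Under these hypotheses, the subspace V = span{ψ, A₁ψ, A₂ψ, A₃ψ, B₁ψ, B₂ψ, B₃ψ, A₁B₁ψ} of H is invariant under the action of all six observables: Aᵢ(V) ⊆ V and Bᵢ(V) ⊆ V for every i ∈ {1,2,3}. -/
/-!
Operators with distinct indices commute, so the four relations are symmetric under permutations of
the indices. For distinct `i j k` they give `BⱼBₖψ = Aᵢψ`, `AⱼBₖψ = Bᵢψ` and `AⱼAₖψ = -Aᵢψ`, and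
from these `AᵢBᵢψ` is the same vector `χ` for every `i`, with `Aᵢχ = Bᵢψ`, `Bᵢχ = -Aᵢψ` and
`BᵢAᵢψ = -χ`. Hence each observable maps each of the eight spanning vectors to `±` another one.
-/

structure IsMaximalViolation {R M : Type*} [Semiring R] [AddCommGroup M] [Module R M]
    (A B : Fin 3 → Module.End R M) (ψ : M) : Prop where
  A_involutive : ∀ i, Function.Involutive (A i)
  B_involutive : ∀ i, Function.Involutive (B i)
  A_comm_A : ∀ i j, i ≠ j → ∀ x, A i (A j x) = A j (A i x)
  A_comm_B : ∀ i j, i ≠ j → ∀ x, A i (B j x) = B j (A i x)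
  B_comm_B : ∀ i j, i ≠ j → ∀ x, B i (B j x) = B j (B i x)
  A_B_B : A 0 (B 1 (B 2 ψ)) = ψ
  B_A_B : B 0 (A 1 (B 2 ψ)) = ψ
  B_B_A : B 0 (B 1 (A 2 ψ)) = ψ
  A_A_A : A 0 (A 1 (A 2 ψ)) = -ψ

theorem Submodule.mapsTo_span_self {R M : Type*} [Semiring R] [AddCommMonoid M] [Module R M]
    {f : M →ₗ[R] M} {s : Set M} (hf : Set.MapsTo f s (span R s)) :
    Set.MapsTo f (span R s) (span R s) := by
  simpa using Submodule.mapsTo_span hf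

theorem Fin.exists_pairwise_ne (i : Fin 3) : ∃ j k, i ≠ j ∧ i ≠ k ∧ j ≠ k := by
  revert i; decide

theorem Fin.exists_ne_and_ne_of_ne {i j : Fin 3} (hij : i ≠ j) : ∃ k, i ≠ k ∧ j ≠ k := by
  revert i j; decide

def IsMaximalViolation.generators {R M : Type*} [Semiring R] [AddCommGroup M] [Module R M]
    (A B : Fin 3 → Module.End R M) (ψ : M) : Set M :=
  insert ψ (insert (A 0 (B 0 ψ)) (Set.range (fun i => A i ψ) ∪ Set.range (fun i => B i ψ)))

namespace IsMaximalViolation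

section Relations

variable {R M : Type*} [Semiring R] [AddCommGroup M] [Module R M]
  {A B : Fin 3 → Module.End R M} {ψ : M} {i j k : Fin 3}

theorem B_comm_A (h : IsMaximalViolation A B ψ) (hij : i ≠ j) (x : M) :
    B i (A j x) = A j (B i x) :=
  (h.A_comm_B j i hij.symm x).symm

theorem A_B_B_of_ne (h : IsMaximalViolation A B ψ) (hij : i ≠ j) (hik : i ≠ k) (hjk : j ≠ k) :
    A i (B j (B k ψ)) = ψ := by
  -- Sorting the operators by index turns every ordering into a hypothesis. The commutations are
  -- instantiated because simp applies a permutation lemma only in the direction of its term order.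
  fin_cases i <;> fin_cases j <;> fin_cases k <;> simp at hij hik hjk ⊢ <;>
    simp only [h.A_B_B, h.B_A_B, h.B_B_A, h.A_comm_B 1 0 (by decide), h.A_comm_B 2 0 (by decide),
      h.A_comm_B 2 1 (by decide), h.B_comm_B 1 0 (by decide), h.B_comm_B 2 0 (by decide),
      h.B_comm_B 2 1 (by decide)]

theorem A_A_A_of_ne (h : IsMaximalViolation A B ψ) (hij : i ≠ j) (hik : i ≠ k) (hjk : j ≠ k) :
    A i (A j (A k ψ)) = -ψ := by
  fin_cases i <;> fin_cases j <;> fin_cases k <;> simp at hij hik hjk ⊢ <;>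
    simp only [h.A_A_A, h.A_comm_A 1 0 (by decide), h.A_comm_A 2 0 (by decide),
      h.A_comm_A 2 1 (by decide)]

theorem B_B_eq (h : IsMaximalViolation A B ψ) (hij : i ≠ j) (hik : i ≠ k) (hjk : j ≠ k) :
    B j (B k ψ) = A i ψ :=
  (h.A_involutive i).eq_iff.mp (h.A_B_B_of_ne hij hik hjk)

theorem A_A_eq (h : IsMaximalViolation A B ψ) (hij : i ≠ j) (hik : i ≠ k) (hjk : j ≠ k) :
    A j (A k ψ) = -A i ψ := by
  rw [(h.A_involutive i).eq_iff.mp (h.A_A_A_of_ne hij hik hjk), map_neg]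

theorem A_B_eq (h : IsMaximalViolation A B ψ) (hij : i ≠ j) (hik : i ≠ k) (hjk : j ≠ k) :
    A j (B k ψ) = B i ψ :=
  (h.B_involutive i).eq_iff.mp <| by rw [h.B_comm_A hij, h.A_B_B_of_ne hij.symm hjk hik]

theorem B_A_eq (h : IsMaximalViolation A B ψ) (hij : i ≠ j) (hik : i ≠ k) (hjk : j ≠ k) :
    B j (A k ψ) = B i ψ := by
  rw [h.B_comm_A hjk, h.A_B_eq hik hij hjk.symm]

theorem A_B_self_eq (h : IsMaximalViolation A B ψ) (i j : Fin 3) :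
    A i (B i ψ) = A j (B j ψ) := by
  rcases eq_or_ne i j with rfl | hij
  · rfl
  obtain ⟨k, hik, hjk⟩ := Fin.exists_ne_and_ne_of_ne hij
  rw [← h.A_B_eq hij hik hjk, h.A_comm_A i j hij, h.A_B_eq hij.symm hjk hik]


theorem B_A_self_eq (h : IsMaximalViolation A B ψ) (hij : i ≠ j) (hik : i ≠ k) (hjk : j ≠ k) :
    B i (A i ψ) = -A j (B j ψ) := by
  rw [← neg_neg (A i ψ), ← h.A_A_eq hij hik hjk, map_neg, h.B_comm_A hij,
    h.B_A_eq hij.symm hjk hik]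

theorem A_A_B_eq (h : IsMaximalViolation A B ψ) (hij : i ≠ j) (hik : i ≠ k) (hjk : j ≠ k) :
    A i (A j (B j ψ)) = B i ψ := by
  rw [h.A_comm_A i j hij, h.A_B_eq hik.symm hjk.symm hij, h.A_B_eq hij hik hjk]

theorem B_A_B_eq (h : IsMaximalViolation A B ψ) (hij : i ≠ j) (hik : i ≠ k) (hjk : j ≠ k) :
    B i (A j (B j ψ)) = -A i ψ := by
  rw [h.B_comm_A hij, h.B_B_eq hik.symm hjk.symm hij, h.A_A_eq hij hik hjk]

end Relations

variable {R M : Type*} [Ring R] [AddCommGroup M] [Module R M]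
  {A B : Fin 3 → Module.End R M} {ψ : M}

theorem mapsTo_A_generators (h : IsMaximalViolation A B ψ) (i : Fin 3) :
    Set.MapsTo (A i) (generators A B ψ) (Submodule.span R (generators A B ψ)) := by
  have mem : ∀ x ∈ generators A B ψ, x ∈ Submodule.span R (generators A B ψ) :=
    fun _ hx => Submodule.subset_span hx
  obtain ⟨j, k, hij, hik, hjk⟩ := Fin.exists_pairwise_ne i
  rintro x (rfl | rfl | ⟨l, rfl⟩ | ⟨l, rfl⟩)
  · exact mem _ (by simp [generators])
  · rw [h.A_B_self_eq 0 j, h.A_A_B_eq hij hik hjk]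
    exact mem _ (by simp [generators])
  · rcases eq_or_ne i l with rfl | hil
    · rw [h.A_involutive i ψ]
      exact mem _ (by simp [generators])
    · obtain ⟨k, hik, hlk⟩ := Fin.exists_ne_and_ne_of_ne hil
      rw [h.A_A_eq hik.symm hlk.symm hil]
      exact neg_mem (mem _ (by simp [generators]))
  · rcases eq_or_ne i l with rfl | hil
    · rw [h.A_B_self_eq i 0]
      exact mem _ (by simp [generators])
    · obtain ⟨k, hik, hlk⟩ := Fin.exists_ne_and_ne_of_ne hil
      rw [h.A_B_eq hik.symm hlk.symm hil]
      exact mem _ (by simp [generators])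

theorem mapsTo_B_generators (h : IsMaximalViolation A B ψ) (i : Fin 3) :
    Set.MapsTo (B i) (generators A B ψ) (Submodule.span R (generators A B ψ)) := by
  have mem : ∀ x ∈ generators A B ψ, x ∈ Submodule.span R (generators A B ψ) :=
    fun _ hx => Submodule.subset_span hx
  obtain ⟨j, k, hij, hik, hjk⟩ := Fin.exists_pairwise_ne i
  rintro x (rfl | rfl | ⟨l, rfl⟩ | ⟨l, rfl⟩)
  · exact mem _ (by simp [generators])
  · rw [h.A_B_self_eq 0 j, h.B_A_B_eq hij hik hjk]
    exact neg_mem (mem _ (by simp [generators]))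
  · rcases eq_or_ne i l with rfl | hil
    · rw [h.B_A_self_eq hij hik hjk, h.A_B_self_eq j 0]
      exact neg_mem (mem _ (by simp [generators]))
    · obtain ⟨k, hik, hlk⟩ := Fin.exists_ne_and_ne_of_ne hil
      rw [h.B_A_eq hik.symm hlk.symm hil]
      exact mem _ (by simp [generators])
  · rcases eq_or_ne i l with rfl | hil
    · rw [h.B_involutive i ψ]
      exact mem _ (by simp [generators])
    · obtain ⟨k, hik, hlk⟩ := Fin.exists_ne_and_ne_of_ne hil
      rw [h.B_B_eq hik.symm hlk.symm hil]
      exact mem _ (by simp [generators])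

end IsMaximalViolation

theorem stmt3_general {H : Type*} [NormedAddCommGroup H] [InnerProductSpace ℂ H]
    (A B : Fin 3 → H →L[ℂ] H)
    (hAinv : ∀ i (x : H), A i (A i x) = x)
    (hBinv : ∀ i (x : H), B i (B i x) = x)
    (hAA : ∀ i j, i ≠ j → ∀ x : H, A i (A j x) = A j (A i x))
    (hAB : ∀ i j, i ≠ j → ∀ x : H, A i (B j x) = B j (A i x))
    (hBB : ∀ i j, i ≠ j → ∀ x : H, B i (B j x) = B j (B i x))
    (ψ : H)
    (h1 : A 0 (B 1 (B 2 ψ)) = ψ)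
    (h2 : B 0 (A 1 (B 2 ψ)) = ψ)
    (h3 : B 0 (B 1 (A 2 ψ)) = ψ)
    (h4 : A 0 (A 1 (A 2 ψ)) = -ψ)
    (V : Submodule ℂ H)
    (hV : V = Submodule.span ℂ
      ({ψ, A 0 ψ, A 1 ψ, A 2 ψ, B 0 ψ, B 1 ψ, B 2 ψ, A 0 (B 0 ψ)} : Set H)) :
    ∀ v ∈ V, ∀ i, A i v ∈ V ∧ B i v ∈ V := by
  have h : IsMaximalViolation (fun i => (A i : H →ₗ[ℂ] H)) (fun i => (B i : H →ₗ[ℂ] H)) ψ :=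
    ⟨hAinv, hBinv, hAA, hAB, hBB, h1, h2, h3, h4⟩
  have hV' : V = Submodule.span ℂ (IsMaximalViolation.generators
      (fun i => (A i : H →ₗ[ℂ] H)) (fun i => (B i : H →ₗ[ℂ] H)) ψ) := by
    rw [hV, IsMaximalViolation.generators]
    congr 1
    ext x
    simp only [Set.mem_insert_iff, Set.mem_singleton_iff, ContinuousLinearMap.coe_coe,
      Set.mem_union, Set.mem_range, Fin.exists_fin_succ, Fin.succ_zero_eq_one, Fin.succ_one_eq_two,
      IsEmpty.exists_iff, or_false]
    tauto
  subst hV'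
  intro v hv i
  exact ⟨Submodule.mapsTo_span_self (h.mapsTo_A_generators i) hv,
    Submodule.mapsTo_span_self (h.mapsTo_B_generators i) hv⟩

/-- under the hypotheses of maximal violation of `I₃` (same setup as
Statement 2), the subspace
`V = span{ψ, A₁ψ, A₂ψ, A₃ψ, B₁ψ, B₂ψ, B₃ψ, A₁B₁ψ}` of `H` is invariant under all
six observables: `Aᵢ(V) ⊆ V` and `Bᵢ(V) ⊆ V` for every `i ∈ {1,2,3}`. -/
theorem stmt3 {H : Type*} [NormedAddCommGroup H] [InnerProductSpace ℂ H]
    (A B : Fin 3 → H →L[ℂ] H)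
    (hAsa : ∀ i (x y : H), (inner ℂ (A i x) y : ℂ) = inner ℂ x (A i y))
    (hBsa : ∀ i (x y : H), (inner ℂ (B i x) y : ℂ) = inner ℂ x (B i y))
    (hAinv : ∀ i (x : H), A i (A i x) = x)
    (hBinv : ∀ i (x : H), B i (B i x) = x)
    (hAA : ∀ i j, i ≠ j → ∀ x : H, A i (A j x) = A j (A i x))
    (hAB : ∀ i j, i ≠ j → ∀ x : H, A i (B j x) = B j (A i x))
    (hBB : ∀ i j, i ≠ j → ∀ x : H, B i (B j x) = B j (B i x))
    (ψ : H) (hψ : ‖ψ‖ = 1)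
    (h1 : A 0 (B 1 (B 2 ψ)) = ψ)
    (h2 : B 0 (A 1 (B 2 ψ)) = ψ)
    (h3 : B 0 (B 1 (A 2 ψ)) = ψ)
    (h4 : A 0 (A 1 (A 2 ψ)) = -ψ)
    (V : Submodule ℂ H)
    (hV : V = Submodule.span ℂ
      ({ψ, A 0 ψ, A 1 ψ, A 2 ψ, B 0 ψ, B 1 ψ, B 2 ψ, A 0 (B 0 ψ)} : Set H)) :
    ∀ v ∈ V, ∀ i, A i v ∈ V ∧ B i v ∈ V :=
  stmt3_general A B hAinv hBinv hAA hAB hBB ψ h1 h2 h3 h4 V hV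
end

section
/- Under these hypotheses, for every vector v in the subspace V = span{ψ, A₁ψ, A₂ψ, A₃ψ, B₁ψ, B₂ψ, B₃ψ, A₁B₁ψ} and every i ∈ {1,2,3}, one has (AᵢBᵢ + BᵢAᵢ) v = 0; that is, the anticommutator {Aᵢ, Bᵢ} vanishes identically on V, so the compressions of Aᵢ and Bᵢ to V anticommute. -/
/-!
Write `Kᵢ = AᵢBᵢ + BᵢAᵢ`. Since `Aᵢ² = Bᵢ² = 1`, `Kᵢ` commutes with `Aᵢ` and `Bᵢ`, and by
compatibility it commutes with `Aⱼ` and `Bⱼ` for `j ≠ i`. Hence `ker Kᵢ` is invariant under all six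
observables, and it suffices to show `Kᵢ ψ = 0`. For `i = 0` the four relations give
`B₀ψ = B₁A₂ψ`, `A₀B₁ψ = B₂ψ`, `B₀A₁ψ = B₂ψ` and `A₀ψ = -A₁A₂ψ`, so that
`A₀B₀ψ = A₂B₂ψ = -B₀A₀ψ`; the other indices follow by permuting the three contexts.
-/

structure IsCompatibleInvolutions {ι R : Type*} [Monoid R] (a b : ι → R) : Prop where
  mul_self_a : ∀ i, a i * a i = 1
  mul_self_b : ∀ i, b i * b i = 1
  commute_aa : Pairwise fun i j => Commute (a i) (a j)
  commute_ab : Pairwise fun i j => Commute (a i) (b j)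
  commute_bb : Pairwise fun i j => Commute (b i) (b j)

section Ring

variable {R : Type*} [Ring R] {a b c : R}

theorem commute_anticomm_of_mul_self_left (ha : a * a = 1) : Commute a (a * b + b * a) := by
  change a * (a * b + b * a) = (a * b + b * a) * a
  rw [mul_add, add_mul, ← mul_assoc, ha, one_mul, mul_assoc, mul_assoc, ha, mul_one, add_comm]

theorem commute_anticomm_of_mul_self_right (hb : b * b = 1) : Commute b (a * b + b * a) := by
  simpa only [add_comm] using commute_anticomm_of_mul_self_left (b := a) hb

theorem Commute.anticomm_right (hca : Commute c a) (hcb : Commute c b) :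
    Commute c (a * b + b * a) :=
  (hca.mul_right hcb).add_right (hcb.mul_right hca)

theorem Commute.mul_mul_eq_rev (hab : Commute a b) (hac : Commute a c) (hbc : Commute b c) :
    a * b * c = c * b * a := by
  rw [hab.eq, mul_assoc, hac.eq, ← mul_assoc, hbc.eq]

end Ring

section Module

variable {R M : Type*} [Ring R] [AddCommGroup M] [Module R M]

theorem smul_eq_of_mul_smul_eq {u x : R} {ψ φ : M} (hu : u * u = 1) (h : (u * x) • ψ = φ) :
    x • ψ = u • φ := by
  rw [← h, mul_smul, smul_smul, hu, one_smul]

theorem Commute.smul_smul_eq_zero {t c : R} {x : M} (h : Commute t c) (hx : t • x = 0) :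
    t • c • x = 0 := by
  rw [smul_smul, h.eq, mul_smul, hx, smul_zero]

end Module

namespace IsCompatibleInvolutions

variable {ι R M : Type*} [Ring R] [AddCommGroup M] [Module R M] {a b : ι → R}
  (hF : IsCompatibleInvolutions a b)
include hF

theorem commute_ba {i j : ι} (h : i ≠ j) : Commute (b i) (a j) :=
  (hF.commute_ab h.symm).symm

theorem commute_a_anticomm (i j : ι) : Commute (a j) (a i * b i + b i * a i) := by
  rcases eq_or_ne j i with rfl | hji
  · exact commute_anticomm_of_mul_self_left (hF.mul_self_a j)
  · exact (hF.commute_aa hji).anticomm_right (hF.commute_ab hji)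

theorem commute_b_anticomm (i j : ι) : Commute (b j) (a i * b i + b i * a i) := by
  rcases eq_or_ne j i with rfl | hji
  · exact commute_anticomm_of_mul_self_right (hF.mul_self_b j)
  · exact (hF.commute_ba hji).anticomm_right (hF.commute_bb hji)

theorem anticomm_smul_a_smul_eq_zero {i : ι} {x : M} (hx : (a i * b i + b i * a i) • x = 0)
    (j : ι) : (a i * b i + b i * a i) • a j • x = 0 :=
  (hF.commute_a_anticomm i j).symm.smul_smul_eq_zero hx

theorem anticomm_smul_b_smul_eq_zero {i : ι} {x : M} (hx : (a i * b i + b i * a i) • x = 0)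
    (j : ι) : (a i * b i + b i * a i) • b j • x = 0 :=
  (hF.commute_b_anticomm i j).symm.smul_smul_eq_zero hx

theorem anticomm_smul_eq_zero_of_ne {i j k : ι} (hik : i ≠ k) (hjk : j ≠ k) {ψ : M}
    (h₀ : (a i * b j * b k) • ψ = ψ) (h₁ : (b i * a j * b k) • ψ = ψ)
    (h₂ : (b i * b j * a k) • ψ = ψ) (h₃ : (a i * a j * a k) • ψ = -ψ) :
    (a i * b i + b i * a i) • ψ = 0 := by
  have hab : (a i * b j) • ψ = b k • ψ := by
    refine smul_eq_of_mul_smul_eq (hF.mul_self_b k) ?_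
    rwa [← ((hF.commute_ab hik).mul_left (hF.commute_bb hjk)).eq]
  have hba : (b i * a j) • ψ = b k • ψ := by
    refine smul_eq_of_mul_smul_eq (hF.mul_self_b k) ?_
    rwa [← ((hF.commute_bb hik).mul_left (hF.commute_ab hjk)).eq]
  have hbi : (b j * a k) • ψ = b i • ψ :=
    smul_eq_of_mul_smul_eq (hF.mul_self_b i) (by rwa [mul_assoc] at h₂)
  have hai : (a j * a k) • ψ = -(a i • ψ) := by
    rw [mul_assoc] at h₃
    rw [smul_eq_of_mul_smul_eq (hF.mul_self_a i) h₃, smul_neg]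
  have hpos : (a i * b i) • ψ = a k • b k • ψ := by
    rw [mul_smul, ← hbi, smul_smul, ← mul_assoc,
      ((hF.commute_aa hik).mul_left (hF.commute_ba hjk)).eq, mul_smul, hab]
  have hneg : (b i * a i) • ψ = -(a k • b k • ψ) := by
    rw [mul_smul, ← neg_neg (a i • ψ), ← hai, smul_neg, smul_smul, ← mul_assoc,
      ((hF.commute_ba hik).mul_left (hF.commute_aa hjk)).eq, mul_smul, hba]
  rw [add_smul, hpos, hneg, add_neg_cancel]

end IsCompatibleInvolutions

theorem IsCompatibleInvolutions.anticomm_smul_eq_zero {R M : Type*} [Ring R] [AddCommGroup M]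
    [Module R M] {a b : Fin 3 → R} (hF : IsCompatibleInvolutions a b) {ψ : M}
    (h₀ : (a 0 * b 1 * b 2) • ψ = ψ) (h₁ : (b 0 * a 1 * b 2) • ψ = ψ)
    (h₂ : (b 0 * b 1 * a 2) • ψ = ψ) (h₃ : (a 0 * a 1 * a 2) • ψ = -ψ) :
    ∀ i, (a i * b i + b i * a i) • ψ = 0
  | 0 => hF.anticomm_smul_eq_zero_of_ne (j := 1) (k := 2) (by decide) (by decide) h₀ h₁ h₂ h₃
  | 1 => by
    refine hF.anticomm_smul_eq_zero_of_ne (j := 0) (k := 2) (by decide) (by decide) ?_ ?_ ?_ ?_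
    · rwa [(hF.commute_ab (by decide : (1 : Fin 3) ≠ 0)).eq]
    · rwa [(hF.commute_ba (by decide : (1 : Fin 3) ≠ 0)).eq]
    · rwa [(hF.commute_bb (by decide : (1 : Fin 3) ≠ 0)).eq]
    · rwa [(hF.commute_aa (by decide : (1 : Fin 3) ≠ 0)).eq]
  | 2 => by
    refine hF.anticomm_smul_eq_zero_of_ne (j := 1) (k := 0) (by decide) (by decide) ?_ ?_ ?_ ?_
    · rwa [(hF.commute_ab (by decide)).mul_mul_eq_rev (hF.commute_ab (by decide))
        (hF.commute_bb (by decide))]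
    · rwa [(hF.commute_ba (by decide)).mul_mul_eq_rev (hF.commute_bb (by decide))
        (hF.commute_ab (by decide))]
    · rwa [(hF.commute_bb (by decide)).mul_mul_eq_rev (hF.commute_ba (by decide))
        (hF.commute_ba (by decide))]
    · rwa [(hF.commute_aa (by decide)).mul_mul_eq_rev (hF.commute_aa (by decide))
        (hF.commute_aa (by decide))]

theorem stmt4_general {H : Type*} [NormedAddCommGroup H] [InnerProductSpace ℂ H]
    (A B : Fin 3 → H →L[ℂ] H)
    (hAinv : ∀ i (x : H), A i (A i x) = x)
    (hBinv : ∀ i (x : H), B i (B i x) = x)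
    (hAA : ∀ i j, i ≠ j → ∀ x : H, A i (A j x) = A j (A i x))
    (hAB : ∀ i j, i ≠ j → ∀ x : H, A i (B j x) = B j (A i x))
    (hBB : ∀ i j, i ≠ j → ∀ x : H, B i (B j x) = B j (B i x))
    (ψ : H)
    (h1 : A 0 (B 1 (B 2 ψ)) = ψ)
    (h2 : B 0 (A 1 (B 2 ψ)) = ψ)
    (h3 : B 0 (B 1 (A 2 ψ)) = ψ)
    (h4 : A 0 (A 1 (A 2 ψ)) = -ψ)
    (V : Submodule ℂ H)
    (hV : V = Submodule.span ℂ
      ({ψ, A 0 ψ, A 1 ψ, A 2 ψ, B 0 ψ, B 1 ψ, B 2 ψ, A 0 (B 0 ψ)} : Set H)) :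
    ∀ v ∈ V, ∀ i, A i (B i v) + B i (A i v) = 0 := by
  have hF : IsCompatibleInvolutions A B :=
    { mul_self_a := fun i => ContinuousLinearMap.ext (hAinv i)
      mul_self_b := fun i => ContinuousLinearMap.ext (hBinv i)
      commute_aa := fun i j h => ContinuousLinearMap.ext (hAA i j h)
      commute_ab := fun i j h => ContinuousLinearMap.ext (hAB i j h)
      commute_bb := fun i j h => ContinuousLinearMap.ext (hBB i j h) }
  have hψ := hF.anticomm_smul_eq_zero h1 h2 h3 h4
  intro v hv i
  rw [hV] at hv
  refine (Submodule.span_le (p := (A i * B i + B i * A i).ker)).2 ?_ hv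
  have hA {x : H} := hF.anticomm_smul_a_smul_eq_zero (i := i) (x := x)
  have hB {x : H} := hF.anticomm_smul_b_smul_eq_zero (i := i) (x := x)
  simp only [Set.insert_subset_iff, Set.singleton_subset_iff, SetLike.mem_coe, LinearMap.mem_ker]
  exact ⟨hψ i, hA (hψ i) 0, hA (hψ i) 1, hA (hψ i) 2, hB (hψ i) 0, hB (hψ i) 1, hB (hψ i) 2,
    hA (hB (hψ i) 0) 0⟩

/-- under the hypotheses of maximal violation of `I₃` (same setup as
Statement 2), for every vector `v` in the subspace
`V = span{ψ, A₁ψ, A₂ψ, A₃ψ, B₁ψ, B₂ψ, B₃ψ, A₁B₁ψ}` and every `i ∈ {1,2,3}` one has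
`(AᵢBᵢ + BᵢAᵢ) v = 0`: the anticommutator `{Aᵢ, Bᵢ}` vanishes identically on `V`,
so the compressions of `Aᵢ` and `Bᵢ` to `V` anticommute. -/
theorem stmt4 {H : Type*} [NormedAddCommGroup H] [InnerProductSpace ℂ H]
    (A B : Fin 3 → H →L[ℂ] H)
    (hAsa : ∀ i (x y : H), (inner ℂ (A i x) y : ℂ) = inner ℂ x (A i y))
    (hBsa : ∀ i (x y : H), (inner ℂ (B i x) y : ℂ) = inner ℂ x (B i y))
    (hAinv : ∀ i (x : H), A i (A i x) = x)
    (hBinv : ∀ i (x : H), B i (B i x) = x)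
    (hAA : ∀ i j, i ≠ j → ∀ x : H, A i (A j x) = A j (A i x))
    (hAB : ∀ i j, i ≠ j → ∀ x : H, A i (B j x) = B j (A i x))
    (hBB : ∀ i j, i ≠ j → ∀ x : H, B i (B j x) = B j (B i x))
    (ψ : H) (hψ : ‖ψ‖ = 1)
    (h1 : A 0 (B 1 (B 2 ψ)) = ψ)
    (h2 : B 0 (A 1 (B 2 ψ)) = ψ)
    (h3 : B 0 (B 1 (A 2 ψ)) = ψ)
    (h4 : A 0 (A 1 (A 2 ψ)) = -ψ)
    (V : Submodule ℂ H)
    (hV : V = Submodule.span ℂ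
      ({ψ, A 0 ψ, A 1 ψ, A 2 ψ, B 0 ψ, B 1 ψ, B 2 ψ, A 0 (B 0 ψ)} : Set H)) :
    ∀ v ∈ V, ∀ i, A i (B i v) + B i (A i v) = 0 :=
  stmt4_general A B hAinv hBinv hAA hAB hBB ψ h1 h2 h3 h4 V hV
end

section
/- Under these hypotheses, the subspace V = span{ψ, A₁ψ, A₂ψ, A₃ψ, B₁ψ, B₂ψ, B₃ψ, A₁B₁ψ} has dimension exactly 8, and there exists a linear isometric equivalence e : V ≃ ℂ² ⊗ ℂ² ⊗ ℂ² such that for every v ∈ V and every i ∈ {1,2,3}, e(Aᵢ v) = Xᵢ e(v) and e(Bᵢ v) = Zᵢ e(v) (this is well defined since Aᵢ v, Bᵢ v ∈ V by invariance of V). -/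
/-!
The operators `Sᵢ = Aᵢ Bᵢ₊₁ Bᵢ₊₂` (indices mod 3) are commuting symmetric involutions fixing `ψ`,
and the relations force `Bᵢ Aᵢ ψ = -Aᵢ Bᵢ ψ`, so `Bᵢ ψ` lies in the `-1`-eigenspace of `Sᵢ`
while `Bᵢ` commutes with the other two `Sⱼ`. Hence the eight vectors `B^g ψ`, `g ∈ (ℤ/2)³`, are
common eigenvectors of the `Sᵢ` with pairwise different eigenvalue patterns: they are orthonormal,
and up to sign they are the eight generators of `V`, so `dim V = 8`. Their sum `w` is fixed by
every `Bᵢ` and satisfies `Bᵢ Aᵢ w = -Aᵢ w`; applying the same argument with the roles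
`(Bᵢ, Sᵢ, ψ)` replaced by `(Aᵢ, Bᵢ, w/‖w‖)` gives an orthonormal basis `A^g w/‖w‖` of `V` on which
`Aᵢ` flips the `i`-th bit of `g` and `Bᵢ` multiplies by `(-1)^gᵢ`, exactly as `Xᵢ` and `Zᵢ` act on
the computational basis of `(ℂ²)^⊗3`.
-/

open scoped ComplexInnerProductSpace Matrix

section TensorFactor

theorem update_add_eq_add_single {ι M : Type*} [DecidableEq ι] [AddZeroClass M] (g : ι → M)
    (i : ι) (a : M) : Function.update g i (g i + a) = g + Pi.single i a := by
  ext j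
  by_cases h : j = i <;> simp [h]

variable {n : ℕ}

theorem tensorFactor_apply_eq_sum (M : Matrix (Fin 2) (Fin 2) ℂ) (i : Fin n)
    (g h : Fin n → Fin 2) :
    tensorFactor n M i g h = ∑ b, if h = Function.update g i b then M (g i) b else 0 := by
  simp only [Function.eq_update_iff, ite_and, Finset.sum_ite_eq, Finset.mem_univ, if_true]
  simp [tensorFactor, Finset.prod_boole, eq_comm]

theorem tensorFactor_mulVec (M : Matrix (Fin 2) (Fin 2) ℂ) (i : Fin n)
    (v : (Fin n → Fin 2) → ℂ) (g : Fin n → Fin 2) :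
    (tensorFactor n M i *ᵥ v) g = ∑ b, M (g i) b * v (Function.update g i b) := by
  simp only [Matrix.mulVec, dotProduct, tensorFactor_apply_eq_sum, Finset.sum_mul, ite_mul,
    zero_mul]
  rw [Finset.sum_comm]
  simp

theorem toEuclideanLin_tensorFactor_pauliX_apply (i : Fin n)
    (v : EuclideanSpace ℂ (Fin n → Fin 2)) (g : Fin n → Fin 2) :
    Matrix.toEuclideanLin (tensorFactor n PauliX i) v g = v (g + Pi.single i 1) := by
  change (tensorFactor n PauliX i *ᵥ WithLp.ofLp v) g = _
  rw [tensorFactor_mulVec, ← update_add_eq_add_single]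
  rcases Fin.exists_fin_two.mp ⟨g i, rfl⟩ with hg | hg <;> simp [PauliX, hg]

theorem toEuclideanLin_tensorFactor_pauliZ_apply (i : Fin n)
    (v : EuclideanSpace ℂ (Fin n → Fin 2)) (g : Fin n → Fin 2) :
    Matrix.toEuclideanLin (tensorFactor n PauliZ i) v g = (-1) ^ (g i : ℕ) * v g := by
  change (tensorFactor n PauliZ i *ᵥ WithLp.ofLp v) g = _
  rw [tensorFactor_mulVec]
  rcases Fin.exists_fin_two.mp ⟨g i, rfl⟩ with hg | hg <;>
    simp [PauliZ, hg] <;> rw [← hg, Function.update_eq_self]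

end TensorFactor

section InvolutionRep

variable {M : Type*} [Monoid M]

def involutionHom (x : M) (hx : x * x = 1) : Multiplicative (Fin 2) →* M where
  toFun k := x ^ (k.toAdd : ℕ)
  map_one' := pow_zero x
  map_mul' a b := by
    rw [toAdd_mul, Fin.val_add, ← pow_add, ← pow_eq_pow_mod _ (by rw [sq, hx])]

variable {ι : Type*} [Fintype ι]

/-- The representation `g ↦ ∏ i, A i ^ g i` of `(ℤ/2)^ι` defined by commuting involutions. -/
def involutionRep (A : ι → M) (hA : ∀ i, A i * A i = 1)
    (hcomm : Pairwise fun i j => Commute (A i) (A j)) : Multiplicative (ι → Fin 2) →* M :=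
  (MonoidHom.noncommPiCoprod (fun i => involutionHom (A i) (hA i))
    (hcomm.mono fun _ _ h _ _ => h.pow_pow _ _)).comp (MulEquiv.piMultiplicative _).toMonoidHom

variable {A : ι → M} {hA : ∀ i, A i * A i = 1} {hcomm : Pairwise fun i j => Commute (A i) (A j)}

theorem involutionRep_ofAdd_single [DecidableEq ι] (i : ι) (k : Fin 2) :
    involutionRep A hA hcomm (.ofAdd (Pi.single i k)) = A i ^ (k : ℕ) := by
  have : MulEquiv.piMultiplicative _ (.ofAdd (Pi.single i k)) =
      Pi.mulSingle (M := fun _ => Multiplicative (Fin 2)) i (.ofAdd k) := by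
    ext j
    by_cases h : j = i
    · subst h
      simp [MulEquiv.piMultiplicative]
    · simp [MulEquiv.piMultiplicative, h]
  simp [involutionRep, this, involutionHom]

theorem mul_involutionRep_ofAdd [DecidableEq ι] (i : ι) (g : ι → Fin 2) :
    A i * involutionRep A hA hcomm (.ofAdd g) =
      involutionRep A hA hcomm (.ofAdd (g + Pi.single i 1)) := by
  rw [add_comm, ofAdd_add, map_mul, involutionRep_ofAdd_single, Fin.val_one, pow_one]

theorem involutionRep_induction (p : M → Prop) (hmul : ∀ x y, p x → p y → p (x * y))
    (hone : p 1) (hbase : ∀ i, p (A i)) (g : Multiplicative (ι → Fin 2)) :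
    p (involutionRep A hA hcomm g) := by
  rw [involutionRep, MonoidHom.comp_apply, MonoidHom.noncommPiCoprod_apply]
  refine Finset.noncommProd_induction _ _ _ p hmul hone fun i _ => ?_
  change p (A i ^ ((g.toAdd i : Fin 2) : ℕ))
  rcases Fin.exists_fin_two.mp ⟨g.toAdd i, rfl⟩ with h | h <;> simp [h, hone, hbase]

theorem commute_involutionRep_ofAdd (x : M) (g : ι → Fin 2)
    (h : ∀ i, g i ≠ 0 → Commute x (A i)) : Commute x (involutionRep A hA hcomm (.ofAdd g)) := by
  rw [involutionRep, MonoidHom.comp_apply, MonoidHom.noncommPiCoprod_apply]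
  refine Finset.noncommProd_commute _ _ _ _ fun i _ => ?_
  change Commute x (A i ^ ((g i : Fin 2) : ℕ))
  by_cases hi : g i = 0
  · simp [hi]
  · exact (h i hi).pow_right _

end InvolutionRep

section QubitFrame

theorem neg_one_pow_fin_two_injective :
    Function.Injective fun k : Fin 2 => (-1 : ℂ) ^ (k : ℕ) := by
  intro a b
  fin_cases a <;> fin_cases b <;> norm_num

theorem neg_one_pow_fin_two_add_one (k : Fin 2) :
    (-1 : ℂ) ^ ((k + 1 : Fin 2) : ℕ) = -(-1) ^ (k : ℕ) := by
  fin_cases k <;> norm_num [Fin.val_add]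

theorem OrthonormalBasis.repr_apply_of_isSymmetric {ι H : Type*} [Fintype ι]
    [NormedAddCommGroup H] [InnerProductSpace ℂ H] {V : Submodule ℂ H}
    (b : OrthonormalBasis ι ℂ V) {T : H →L[ℂ] H} (hT : (T : H →ₗ[ℂ] H).IsSymmetric) {x : H}
    (hTx : T x ∈ V) (g : ι) : b.repr ⟨T x, hTx⟩ g = ⟪T (b g), x⟫ := by
  rw [b.repr_apply_apply, Submodule.coe_inner]
  exact (hT _ _).symm

variable {ι : Type*} [Fintype ι] {H : Type*} [NormedAddCommGroup H] [InnerProductSpace ℂ H]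
  {F G : ι → H →L[ℂ] H} {hF : ∀ i, F i * F i = 1}
  {hFF : Pairwise fun i j => Commute (F i) (F j)}

theorem inner_involutionRep_apply (hFs : ∀ i, (F i : H →ₗ[ℂ] H).IsSymmetric)
    (g : Multiplicative (ι → Fin 2)) (x y : H) :
    ⟪involutionRep F hF hFF g x, involutionRep F hF hFF g y⟫ = ⟪x, y⟫ := by
  refine involutionRep_induction (fun T : H →L[ℂ] H => ∀ x y, ⟪T x, T y⟫ = ⟪x, y⟫)
    (fun S T hS hT x y => by simp only [mul_apply_eq_comp, hS, hT])
    (fun x y => rfl) (fun i x y => ?_) g x y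
  rw [← ContinuousLinearMap.coe_coe, hFs i, ContinuousLinearMap.coe_coe, ← mul_apply_eq_comp,
    hF i, one_apply_eq_self]

variable [DecidableEq ι]

theorem apply_involutionRep_ofAdd {T : H →L[ℂ] H} {i : ι} (hT : ∀ j, j ≠ i → Commute T (F j))
    {w : H} (hTw : T w = w) (hTFw : T (F i w) = -F i w) (g : ι → Fin 2) :
    T (involutionRep F hF hFF (.ofAdd g) w) =
      (-1 : ℂ) ^ (g i : ℕ) • involutionRep F hF hFF (.ofAdd g) w := by
  have hsplit : Multiplicative.ofAdd g =
      .ofAdd (Function.update g i 0) * .ofAdd (Pi.single i (g i)) := by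
    rw [← ofAdd_add]
    congr 1
    ext j
    by_cases h : j = i <;> simp [h]
  have hcomm : Commute T (involutionRep F hF hFF (.ofAdd (Function.update g i 0))) :=
    commute_involutionRep_ofAdd T _ fun j hj => hT j fun h => hj (by simp [h])
  have hpow : T ((F i ^ (g i : ℕ)) w) = (-1 : ℂ) ^ (g i : ℕ) • (F i ^ (g i : ℕ)) w := by
    rcases Fin.exists_fin_two.mp ⟨g i, rfl⟩ with h | h <;> simp [h, hTw, hTFw]
  rw [hsplit, map_mul, involutionRep_ofAdd_single, mul_apply_eq_comp, ← mul_apply_eq_comp T,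
    hcomm.eq, mul_apply_eq_comp, hpow, map_smul]

theorem orthonormal_involutionRep (hFs : ∀ i, (F i : H →ₗ[ℂ] H).IsSymmetric)
    (hGs : ∀ i, (G i : H →ₗ[ℂ] H).IsSymmetric) (hGF : ∀ i j, j ≠ i → Commute (G i) (F j))
    {w : H} (hw : ‖w‖ = 1) (hGw : ∀ i, G i w = w) (hGFw : ∀ i, G i (F i w) = -F i w) :
    Orthonormal ℂ fun g : ι → Fin 2 => involutionRep F hF hFF (.ofAdd g) w := by
  refine ⟨fun g => ?_, fun g h hgh => ?_⟩
  · rw [← hw]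
    exact ((involutionRep F hF hFF (.ofAdd g) : H →ₗ[ℂ] H).isometryOfInner
      (inner_involutionRep_apply hFs _)).norm_map w
  · obtain ⟨i, hi⟩ := Function.ne_iff.mp hgh
    have hne : (-1 : ℂ) ^ (g i : ℕ) ≠ (-1) ^ (h i : ℕ) :=
      fun h => hi (neg_one_pow_fin_two_injective h)
    have heigen (k : ι → Fin 2) := Module.End.mem_eigenspace_iff.mpr
      (apply_involutionRep_ofAdd (hF := hF) (hFF := hFF) (hGF i) (hGw i) (hGFw i) k)
    simpa using (hGs i).orthogonalFamily_eigenspaces hne ⟨_, heigen g⟩ ⟨_, heigen h⟩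

theorem exists_linearIsometryEquiv_tensorFactor {n : ℕ} {F G : Fin n → H →L[ℂ] H}
    {hF : ∀ i, F i * F i = 1} {hFF : Pairwise fun i j => Commute (F i) (F j)}
    (hFs : ∀ i, (F i : H →ₗ[ℂ] H).IsSymmetric)
    (hGs : ∀ i, (G i : H →ₗ[ℂ] H).IsSymmetric) (hGF : ∀ i j, j ≠ i → Commute (G i) (F j))
    {w : H} (hw : ‖w‖ = 1) (hGw : ∀ i, G i w = w) (hGFw : ∀ i, G i (F i w) = -F i w)
    (V : Submodule ℂ H) (hwV : ∀ g, involutionRep F hF hFF (.ofAdd g) w ∈ V)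
    (hV : Module.finrank ℂ V = 2 ^ n) :
    ∃ e : V ≃ₗᵢ[ℂ] EuclideanSpace ℂ (Fin n → Fin 2),
      ∀ (v : H) (hv : v ∈ V) (i : Fin n) (hFv : F i v ∈ V) (hGv : G i v ∈ V),
        e ⟨F i v, hFv⟩ = Matrix.toEuclideanLin (tensorFactor n PauliX i) (e ⟨v, hv⟩) ∧
        e ⟨G i v, hGv⟩ = Matrix.toEuclideanLin (tensorFactor n PauliZ i) (e ⟨v, hv⟩) := by
  set u : (Fin n → Fin 2) → V := fun g => ⟨_, hwV g⟩
  have hu : Orthonormal ℂ u := V.subtypeₗᵢ.orthonormal_comp_iff.mp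
    (orthonormal_involutionRep hFs hGs hGF hw hGw hGFw)
  have hcard : Fintype.card (Fin n → Fin 2) = Module.finrank ℂ V := by simp [hV]
  let b := (basisOfOrthonormalOfCardEqFinrank hu hcard).toOrthonormalBasis
    (by rwa [coe_basisOfOrthonormalOfCardEqFinrank])
  have hb (g : Fin n → Fin 2) : (b g : H) = involutionRep F hF hFF (.ofAdd g) w := by
    simp [b, u]
  refine ⟨b.repr, fun v hv i hFv hGv => ⟨?_, ?_⟩⟩ <;> ext g
  · rw [toEuclideanLin_tensorFactor_pauliX_apply, b.repr_apply_of_isSymmetric (hFs i),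
      b.repr_apply_apply, Submodule.coe_inner, hb, hb, ← mul_apply_eq_comp,
      mul_involutionRep_ofAdd]
  · rw [toEuclideanLin_tensorFactor_pauliZ_apply, b.repr_apply_of_isSymmetric (hGs i),
      b.repr_apply_apply, Submodule.coe_inner, hb,
      apply_involutionRep_ofAdd (hGF i) (hGw i) (hGFw i), inner_smul_left]
    simp

end QubitFrame

theorem Fin.three_add_ne (i : Fin 3) : i ≠ i + 1 ∧ i ≠ i + 2 ∧ i + 1 ≠ i + 2 := by
  fin_cases i <;> decide

section MaximalViolation

variable {H : Type*} [NormedAddCommGroup H] [InnerProductSpace ℂ H]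

structure MaximallyViolatesI3 (A B : Fin 3 → H →L[ℂ] H) (ψ : H) : Prop where
  isSymmetric_A : ∀ i, (A i : H →ₗ[ℂ] H).IsSymmetric
  isSymmetric_B : ∀ i, (B i : H →ₗ[ℂ] H).IsSymmetric
  A_A : ∀ i x, A i (A i x) = x
  B_B : ∀ i x, B i (B i x) = x
  A_A_comm : ∀ i j, i ≠ j → ∀ x, A i (A j x) = A j (A i x)
  A_B_comm : ∀ i j, i ≠ j → ∀ x, A i (B j x) = B j (A i x)
  B_B_comm : ∀ i j, i ≠ j → ∀ x, B i (B j x) = B j (B i x)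
  A_B_B : A 0 (B 1 (B 2 ψ)) = ψ
  B_A_B : B 0 (A 1 (B 2 ψ)) = ψ
  B_B_A : B 0 (B 1 (A 2 ψ)) = ψ
  A_A_A : A 0 (A 1 (A 2 ψ)) = -ψ

def stabilizer (A B : Fin 3 → H →L[ℂ] H) (i : Fin 3) : H →L[ℂ] H :=
  A i * B (i + 1) * B (i + 2)

namespace MaximallyViolatesI3

variable {A B : Fin 3 → H →L[ℂ] H} {ψ : H}

theorem A_mul_self (h : MaximallyViolatesI3 A B ψ) (i : Fin 3) : A i * A i = 1 :=
  ContinuousLinearMap.ext (h.A_A i)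

theorem B_mul_self (h : MaximallyViolatesI3 A B ψ) (i : Fin 3) : B i * B i = 1 :=
  ContinuousLinearMap.ext (h.B_B i)

theorem commute_A_A (h : MaximallyViolatesI3 A B ψ) : Pairwise fun i j => Commute (A i) (A j) :=
  fun i j hij => ContinuousLinearMap.ext (h.A_A_comm i j hij)

theorem commute_B_B (h : MaximallyViolatesI3 A B ψ) (i j : Fin 3) : Commute (B i) (B j) := by
  obtain rfl | hij := eq_or_ne i j
  · exact Commute.refl _
  · exact ContinuousLinearMap.ext (h.B_B_comm i j hij)

theorem pairwise_commute_B (h : MaximallyViolatesI3 A B ψ) :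
    Pairwise fun i j => Commute (B i) (B j) :=
  fun i j _ => h.commute_B_B i j

theorem commute_A_B (h : MaximallyViolatesI3 A B ψ) {i j : Fin 3} (hij : i ≠ j) :
    Commute (A i) (B j) :=
  ContinuousLinearMap.ext (h.A_B_comm i j hij)

theorem A_B_B_of_ne (h : MaximallyViolatesI3 A B ψ) {i j k : Fin 3} (hij : i ≠ j) (hik : i ≠ k)
    (hjk : j ≠ k) : A i (B j (B k ψ)) = ψ := by
  fin_cases i <;> fin_cases j <;> fin_cases k <;> simp at hij hik hjk ⊢ <;>
    grind [h.A_B_B, h.B_A_B, h.B_B_A, h.A_B_comm, h.B_B_comm]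

theorem A_A_A_of_ne (h : MaximallyViolatesI3 A B ψ) {i j k : Fin 3} (hij : i ≠ j) (hik : i ≠ k)
    (hjk : j ≠ k) : A i (A j (A k ψ)) = -ψ := by
  fin_cases i <;> fin_cases j <;> fin_cases k <;> simp at hij hik hjk ⊢ <;>
    grind [h.A_A_A, h.A_A_comm]

theorem B_B_eq_A (h : MaximallyViolatesI3 A B ψ) {i j k : Fin 3} (hij : i ≠ j) (hik : i ≠ k)
    (hjk : j ≠ k) : B j (B k ψ) = A i ψ := by
  have := congrArg (A i) (h.A_B_B_of_ne hij hik hjk)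
  rwa [h.A_A] at this

theorem A_A_eq_neg_A (h : MaximallyViolatesI3 A B ψ) {i j k : Fin 3} (hij : i ≠ j) (hik : i ≠ k)
    (hjk : j ≠ k) : A i (A j ψ) = -A k ψ := by
  have := congrArg (A k) (h.A_A_A_of_ne hik.symm hjk.symm hij)
  rwa [h.A_A, map_neg] at this

theorem B_A_self (h : MaximallyViolatesI3 A B ψ) (i : Fin 3) : B i (A i ψ) = -A i (B i ψ) := by
  obtain ⟨hij, hik, hjk⟩ := Fin.three_add_ne i
  set j := i + 1
  set k := i + 2
  have hBi : B k (A j ψ) = B i ψ := by rw [← h.B_B_eq_A hjk hij.symm hik.symm, h.B_B]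
  calc B i (A i ψ) = B i (B j (B k ψ)) := by rw [h.B_B_eq_A hij hik hjk]
    _ = B k (B i (B j ψ)) := by rw [h.B_B_comm j k hjk, h.B_B_comm i k hik]
    _ = B k (A k ψ) := by rw [h.B_B_eq_A hik.symm hjk.symm hij]
    _ = -B k (A i (A j ψ)) := by rw [h.A_A_eq_neg_A hij hik hjk, map_neg, neg_neg]
    _ = -A i (B i ψ) := by rw [← h.A_B_comm i k hik, hBi]

theorem stabilizer_apply_self (h : MaximallyViolatesI3 A B ψ) (i : Fin 3) :
    stabilizer A B i ψ = ψ :=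
  h.A_B_B_of_ne (Fin.three_add_ne i).1 (Fin.three_add_ne i).2.1 (Fin.three_add_ne i).2.2

theorem stabilizer_apply_B_self (h : MaximallyViolatesI3 A B ψ) (i : Fin 3) :
    stabilizer A B i (B i ψ) = -B i ψ := by
  obtain ⟨hij, hik, hjk⟩ := Fin.three_add_ne i
  change A i (B (i + 1) (B (i + 2) (B i ψ))) = _
  rw [h.B_B_comm (i + 2) i hik.symm, h.B_B_comm (i + 1) i hij.symm, h.B_B_eq_A hij hik hjk,
    h.B_A_self, map_neg, h.A_A]

theorem commute_stabilizer_B (h : MaximallyViolatesI3 A B ψ) {i j : Fin 3} (hji : j ≠ i) :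
    Commute (stabilizer A B i) (B j) :=
  ((h.commute_A_B hji.symm).mul_left (h.commute_B_B _ _)).mul_left (h.commute_B_B _ _)

theorem isSymmetric_stabilizer (h : MaximallyViolatesI3 A B ψ) (i : Fin 3) :
    (stabilizer A B i : H →ₗ[ℂ] H).IsSymmetric := by
  obtain ⟨hij, hik, -⟩ := Fin.three_add_ne i
  have hc {S T : H →L[ℂ] H} (hST : Commute S T) : Commute (S : H →ₗ[ℂ] H) T :=
    hST.map ContinuousLinearMap.toLinearMapRingHom
  exact ((h.isSymmetric_A i).mul_of_commute (h.isSymmetric_B _)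
    (hc (h.commute_A_B hij))).mul_of_commute (h.isSymmetric_B _)
    (hc ((h.commute_A_B hik).mul_left (h.commute_B_B _ _)))

theorem A_eq_stabilizer_mul (h : MaximallyViolatesI3 A B ψ) (i : Fin 3) :
    A i = stabilizer A B i * B (i + 2) * B (i + 1) := by
  simp [stabilizer, mul_assoc, h.B_mul_self]

noncomputable def stabilizerEigenvector (h : MaximallyViolatesI3 A B ψ) (g : Fin 3 → Fin 2) : H :=
  involutionRep B h.B_mul_self h.pairwise_commute_B (.ofAdd g) ψ

theorem stabilizerEigenvector_eq (h : MaximallyViolatesI3 A B ψ) (g : Fin 3 → Fin 2) :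
    h.stabilizerEigenvector g = (B 0 ^ (g 0 : ℕ)) ((B 1 ^ (g 1 : ℕ)) ((B 2 ^ (g 2 : ℕ)) ψ)) := by
  have hg : Multiplicative.ofAdd g = .ofAdd (Pi.single 0 (g 0)) * .ofAdd (Pi.single 1 (g 1)) *
      .ofAdd (Pi.single 2 (g 2)) := by
    simp only [← ofAdd_add]
    congr 1
    ext j
    fin_cases j <;> simp
  rw [stabilizerEigenvector, hg, map_mul, map_mul, involutionRep_ofAdd_single,
    involutionRep_ofAdd_single, involutionRep_ofAdd_single, mul_apply_eq_comp, mul_apply_eq_comp]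

theorem B_apply_stabilizerEigenvector (h : MaximallyViolatesI3 A B ψ) (i : Fin 3)
    (g : Fin 3 → Fin 2) :
    B i (h.stabilizerEigenvector g) = h.stabilizerEigenvector (g + Pi.single i 1) := by
  rw [stabilizerEigenvector, ← mul_apply_eq_comp, mul_involutionRep_ofAdd, stabilizerEigenvector]

theorem stabilizer_apply_stabilizerEigenvector (h : MaximallyViolatesI3 A B ψ) (i : Fin 3)
    (g : Fin 3 → Fin 2) :
    stabilizer A B i (h.stabilizerEigenvector g) =
      (-1 : ℂ) ^ (g i : ℕ) • h.stabilizerEigenvector g :=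
  apply_involutionRep_ofAdd (fun _ hj => h.commute_stabilizer_B hj) (h.stabilizer_apply_self i)
    (h.stabilizer_apply_B_self i) g

theorem A_apply_stabilizerEigenvector (h : MaximallyViolatesI3 A B ψ) (i : Fin 3)
    (g : Fin 3 → Fin 2) :
    A i (h.stabilizerEigenvector g) = (-1 : ℂ) ^ (g i : ℕ) •
      h.stabilizerEigenvector (g + Pi.single (i + 1) 1 + Pi.single (i + 2) 1) := by
  rw [h.A_eq_stabilizer_mul i, mul_apply_eq_comp, mul_apply_eq_comp,
    B_apply_stabilizerEigenvector, B_apply_stabilizerEigenvector,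
    stabilizer_apply_stabilizerEigenvector]
  simp

theorem orthonormal_stabilizerEigenvector (h : MaximallyViolatesI3 A B ψ) (hψ : ‖ψ‖ = 1) :
    Orthonormal ℂ h.stabilizerEigenvector :=
  orthonormal_involutionRep h.isSymmetric_B h.isSymmetric_stabilizer
    (fun _ _ hji => h.commute_stabilizer_B hji) hψ h.stabilizer_apply_self
    h.stabilizer_apply_B_self

theorem A_mem_span (h : MaximallyViolatesI3 A B ψ) (i : Fin 3) {x : H}
    (hx : x ∈ Submodule.span ℂ (Set.range h.stabilizerEigenvector)) :
    A i x ∈ Submodule.span ℂ (Set.range h.stabilizerEigenvector) := by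
  refine (Submodule.map_span_le (A i : H →ₗ[ℂ] H) _ _).mpr ?_ (Submodule.mem_map_of_mem hx)
  rintro _ ⟨g, rfl⟩
  rw [ContinuousLinearMap.coe_coe, A_apply_stabilizerEigenvector]
  exact Submodule.smul_mem _ _ (Submodule.subset_span (Set.mem_range_self _))

theorem B_mem_span (h : MaximallyViolatesI3 A B ψ) (i : Fin 3) {x : H}
    (hx : x ∈ Submodule.span ℂ (Set.range h.stabilizerEigenvector)) :
    B i x ∈ Submodule.span ℂ (Set.range h.stabilizerEigenvector) := by
  refine (Submodule.map_span_le (B i : H →ₗ[ℂ] H) _ _).mpr ?_ (Submodule.mem_map_of_mem hx)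
  rintro _ ⟨g, rfl⟩
  rw [ContinuousLinearMap.coe_coe, B_apply_stabilizerEigenvector]
  exact Submodule.subset_span (Set.mem_range_self _)

theorem span_generators_eq (h : MaximallyViolatesI3 A B ψ) :
    Submodule.span ℂ ({ψ, A 0 ψ, A 1 ψ, A 2 ψ, B 0 ψ, B 1 ψ, B 2 ψ, A 0 (B 0 ψ)} : Set H) =
      Submodule.span ℂ (Set.range h.stabilizerEigenvector) := by
  apply le_antisymm
  · have hψ : ψ ∈ Submodule.span ℂ (Set.range h.stabilizerEigenvector) := by
      simpa [stabilizerEigenvector_eq] using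
        Submodule.subset_span (Set.mem_range_self (f := h.stabilizerEigenvector) 0)
    rw [Submodule.span_le]
    rintro x (rfl | rfl | rfl | rfl | rfl | rfl | rfl | rfl) <;>
      solve_by_elim [h.A_mem_span, h.B_mem_span]
  · refine Submodule.span_le.mpr (Set.range_subset_iff.mpr fun g => ?_)
    have e0 : B 1 (B 2 ψ) = A 0 ψ := h.B_B_eq_A (by decide) (by decide) (by decide)
    have e1 : B 0 (B 2 ψ) = A 1 ψ := h.B_B_eq_A (by decide) (by decide) (by decide)
    have e2 : B 0 (B 1 ψ) = A 2 ψ := h.B_B_eq_A (by decide) (by decide) (by decide)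
    rw [SetLike.mem_coe, stabilizerEigenvector_eq]
    rcases Fin.exists_fin_two.mp ⟨g 0, rfl⟩ with h0 | h0 <;>
    rcases Fin.exists_fin_two.mp ⟨g 1, rfl⟩ with h1 | h1 <;>
    rcases Fin.exists_fin_two.mp ⟨g 2, rfl⟩ with h2 | h2 <;>
    simp only [h0, h1, h2, Fin.val_zero, Fin.val_one, pow_zero, pow_one, one_apply_eq_self, e0,
      e1, e2, h.B_A_self] <;>
    first
    | refine Submodule.neg_mem _ (Submodule.subset_span ?_); simp
    | refine Submodule.subset_span ?_; simp

/-- Eight times the projection of `ψ` onto the common `+1`-eigenspace of the `B i`. -/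
noncomputable def fixedVector (h : MaximallyViolatesI3 A B ψ) : H :=
  ∑ g, h.stabilizerEigenvector g

theorem B_apply_fixedVector (h : MaximallyViolatesI3 A B ψ) (i : Fin 3) :
    B i h.fixedVector = h.fixedVector := by
  simp only [fixedVector, map_sum, B_apply_stabilizerEigenvector]
  exact Equiv.sum_comp (Equiv.addRight _) h.stabilizerEigenvector

theorem B_A_apply_fixedVector (h : MaximallyViolatesI3 A B ψ) (i : Fin 3) :
    B i (A i h.fixedVector) = -A i h.fixedVector := by
  simp only [fixedVector, map_sum, A_apply_stabilizerEigenvector, map_smul,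
    B_apply_stabilizerEigenvector, ← Finset.sum_neg_distrib]
  conv_rhs => rw [← Equiv.sum_comp (Equiv.addRight (Pi.single i 1))]
  refine Finset.sum_congr rfl fun g _ => ?_
  simp only [Equiv.coe_addRight, Pi.add_apply, Pi.single_eq_same, neg_one_pow_fin_two_add_one,
    neg_smul, neg_neg]
  congr 2
  abel

theorem fixedVector_ne_zero (h : MaximallyViolatesI3 A B ψ) (hψ : ‖ψ‖ = 1) :
    h.fixedVector ≠ 0 := by
  intro h0
  have := (h.orthonormal_stabilizerEigenvector hψ).inner_right_fintype (fun _ => 1) 0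
  simp_all [fixedVector]

theorem exists_unit_vector_fixed_by_B (h : MaximallyViolatesI3 A B ψ) (hψ : ‖ψ‖ = 1) :
    ∃ w : H, ‖w‖ = 1 ∧ (∀ i, B i w = w) ∧ (∀ i, B i (A i w) = -A i w) ∧
      ∀ g, involutionRep A h.A_mul_self h.commute_A_A (.ofAdd g) w ∈
        Submodule.span ℂ (Set.range h.stabilizerEigenvector) := by
  refine ⟨(‖h.fixedVector‖ : ℂ)⁻¹ • h.fixedVector, norm_smul_inv_norm (h.fixedVector_ne_zero hψ),
    fun i => by rw [map_smul, h.B_apply_fixedVector],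
    fun i => by rw [map_smul, map_smul, h.B_A_apply_fixedVector, smul_neg], fun g => ?_⟩
  refine involutionRep_induction
    (fun T : H →L[ℂ] H => ∀ x ∈ Submodule.span ℂ (Set.range h.stabilizerEigenvector),
      T x ∈ Submodule.span ℂ (Set.range h.stabilizerEigenvector))
    (fun S T hS hT x hx => hS _ (hT x hx)) (fun x hx => hx) (fun i x hx => h.A_mem_span i hx)
    _ _ ?_
  exact Submodule.smul_mem _ _
    (Submodule.sum_mem _ fun g _ => Submodule.subset_span (Set.mem_range_self g))

end MaximallyViolatesI3

end MaximalViolation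

/-- under the maximal-violation hypotheses for `I₃` (setup as in
Statement 2), the subspace `V = span{ψ, A₁ψ, A₂ψ, A₃ψ, B₁ψ, B₂ψ, B₃ψ, A₁B₁ψ}` has
dimension exactly `8`, and there is a linear isometric equivalence
`e : V ≃ ℂ² ⊗ ℂ² ⊗ ℂ²` (the right-hand side realised as
`EuclideanSpace ℂ (Fin 3 → Fin 2)`) intertwining `Aᵢ` with `Xᵢ` and `Bᵢ` with `Zᵢ`:
`e(Aᵢ v) = Xᵢ e(v)` and `e(Bᵢ v) = Zᵢ e(v)` for all `v ∈ V` (well defined since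
`Aᵢ v, Bᵢ v ∈ V` by invariance of `V`, expressed here by quantifying over the
membership proofs). -/
theorem stmt7 {H : Type*} [NormedAddCommGroup H] [InnerProductSpace ℂ H]
    (A B : Fin 3 → H →L[ℂ] H)
    (hAsa : ∀ i (x y : H), (inner ℂ (A i x) y : ℂ) = inner ℂ x (A i y))
    (hBsa : ∀ i (x y : H), (inner ℂ (B i x) y : ℂ) = inner ℂ x (B i y))
    (hAinv : ∀ i (x : H), A i (A i x) = x)
    (hBinv : ∀ i (x : H), B i (B i x) = x)
    (hAA : ∀ i j, i ≠ j → ∀ x : H, A i (A j x) = A j (A i x))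
    (hAB : ∀ i j, i ≠ j → ∀ x : H, A i (B j x) = B j (A i x))
    (hBB : ∀ i j, i ≠ j → ∀ x : H, B i (B j x) = B j (B i x))
    (ψ : H) (hψ : ‖ψ‖ = 1)
    (h1 : A 0 (B 1 (B 2 ψ)) = ψ)
    (h2 : B 0 (A 1 (B 2 ψ)) = ψ)
    (h3 : B 0 (B 1 (A 2 ψ)) = ψ)
    (h4 : A 0 (A 1 (A 2 ψ)) = -ψ)
    (V : Submodule ℂ H)
    (hV : V = Submodule.span ℂ
      ({ψ, A 0 ψ, A 1 ψ, A 2 ψ, B 0 ψ, B 1 ψ, B 2 ψ, A 0 (B 0 ψ)} : Set H)) :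
    Module.finrank ℂ V = 8 ∧
    ∃ e : V ≃ₗᵢ[ℂ] EuclideanSpace ℂ (Fin 3 → Fin 2),
      ∀ (v : H) (hv : v ∈ V) (i : Fin 3) (hAv : A i v ∈ V) (hBv : B i v ∈ V),
        e ⟨A i v, hAv⟩ = Matrix.toEuclideanLin (tensorFactor 3 PauliX i) (e ⟨v, hv⟩) ∧
        e ⟨B i v, hBv⟩ = Matrix.toEuclideanLin (tensorFactor 3 PauliZ i) (e ⟨v, hv⟩) := by
  have h : MaximallyViolatesI3 A B ψ := ⟨hAsa, hBsa, hAinv, hBinv, hAA, hAB, hBB, h1, h2, h3, h4⟩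
  have hVW : V = Submodule.span ℂ (Set.range h.stabilizerEigenvector) :=
    hV.trans h.span_generators_eq
  have hfin : Module.finrank ℂ V = 2 ^ 3 := by
    rw [hVW, finrank_span_eq_card (h.orthonormal_stabilizerEigenvector hψ).linearIndependent]
    simp
  obtain ⟨w, hw, hBw, hBAw, hwV⟩ := h.exists_unit_vector_fixed_by_B hψ
  exact ⟨hfin, exists_linearIsometryEquiv_tensorFactor h.isSymmetric_A h.isSymmetric_B
    (fun _ _ hji => (h.commute_A_B hji).symm) hw hBw hBAw V (hVW ▸ hwV) hfin⟩
end
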